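/- arXiv:2604.01744 — 4 statements merged into one kernel-verified Lean document; each statement's English description precedes it below -/
import Mathlib

section
/- Let {P_{j,m}(ε,t,A)} be a secular-coefficient family with renormalized amplitudes 𝒜_j(ε,t,A) = P_{j,m_j}(ε,t,A). Then the renormalized amplitudes satisfy the RG equation ∂_t 𝒜_j(ε,t,A) = [∂_s P_{j,m_j}(ε, s, 𝒜(ε,t,A))] evaluated at s = 0, for all 1 ≤ j ≤ n, as an identity in ℂ[t,A][[ε]] (here ∂_t and ∂_s act coefficientwise on the polynomial coefficients). Moreover both sides are divisible by ε, i.e. the RG dynamics is slow. -/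
noncomputable section

open Polynomial

/-- Finite `R`-linear combinations of Fourier modes `e^{i m t}` (`m : ℤ`):
the mode-`m` coefficient of `x` is `x m : R`. -/
abbrev ModeRing (R : Type) [CommRing R] : Type := AddMonoidAlgebra R ℤ

/-- Formal power series in `ε` whose coefficients are finite Fourier sums with
coefficients in `R`. -/
abbrev EpsSeries (R : Type) [CommRing R] : Type := PowerSeries (ModeRing R)

/-- The mode `e^{i t}`, as a unit of `EpsSeries R` (inverse `e^{-i t}`). -/
def zUnit (R : Type) [CommRing R] : (EpsSeries R)ˣ where
  val := PowerSeries.C (AddMonoidAlgebra.single 1 1)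
  inv := PowerSeries.C (AddMonoidAlgebra.single (-1) 1)
  val_inv := by
    rw [← map_mul, AddMonoidAlgebra.single_mul_single]
    norm_num [AddMonoidAlgebra.one_def]
  inv_val := by
    rw [← map_mul, AddMonoidAlgebra.single_mul_single]
    norm_num [AddMonoidAlgebra.one_def]

/-- Evaluation of a Laurent polynomial in `z` (an element of `ℂ[z,z⁻¹] = AddMonoidAlgebra ℂ ℤ`)
at `z = e^{i t}`, landing in `EpsSeries R`. -/
def zEval (R : Type) [CommRing R] [Algebra ℂ R] : AddMonoidAlgebra ℂ ℤ →+* EpsSeries R :=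
  AddMonoidAlgebra.liftNCRingHom
    ((PowerSeries.C (R := ModeRing R)).comp (AddMonoidAlgebra.singleZeroRingHom.comp (algebraMap ℂ R)))
    ((Units.coeHom _).comp (zpowersHom _ (zUnit R)))
    (fun _ _ => Commute.all _ _)

/-- Evaluation of `V ∈ ℂ[ε, z, z⁻¹, y₁, …, yₙ]` (encoded as a polynomial in the `y`-variables
with coefficients in `ℂ[z,z⁻¹][ε]`) at `z = e^{i t}`, `ε = ε` (the power series variable)
and given formal series values of the `y`-variables. -/
def VEval {n : ℕ} (R : Type) [CommRing R] [Algebra ℂ R]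
    (V : MvPolynomial (Fin n) (Polynomial (AddMonoidAlgebra ℂ ℤ)))
    (y : Fin n → EpsSeries R) : EpsSeries R :=
  MvPolynomial.eval₂ (Polynomial.eval₂RingHom (zEval R) PowerSeries.X) y V

/-- The polynomial ring `ℂ[t, A₁, …, Aₙ]`: the variable `none` is `t`, `some i` is `Aᵢ`. -/
abbrev AmpRing (n : ℕ) : Type := MvPolynomial (Option (Fin n)) ℂ

/-- The secular coefficient `P_{j,m}(ε,t,A) ∈ ℂ[t,A][[ε]]` of a family
`Q j = Σ_k ε^k Σ_m P_{j,m}^{(k)} e^{imt}`. -/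
def Pc {n : ℕ} (Q : Fin n → EpsSeries (AmpRing n)) (j : Fin n) (m : ℤ) :
    PowerSeries (AmpRing n) :=
  PowerSeries.mk fun k => (PowerSeries.coeff (R := ModeRing (AmpRing n)) k (Q j)).coeff m

/-- A secular-coefficient family for the system `dy_j/dt = i m_j y_j + ε V_j(ε,e^{±it},y)`:
(a) at each `ε`-order only finitely many modes are nonzero (built into `ModeRing`);
(b) the `ε⁰`-coefficient of `P_{j,m}` is `A_j δ_{m,m_j}`;
(c) for `k ≥ 1` the `ε^k`-coefficient of the resonant `P_{j,m_j}` vanishes at `t = 0`;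
(d) the differential equation holds order by order in `ε` and mode by mode in `e^{imt}`:
`∂_t P_{j,m} + i(m-m_j) P_{j,m} = [ε V_j(ε, e^{±it}, Σ_l P_{·,l} e^{ilt})]_{e^{imt}}`. -/
structure IsSecularFamily {n : ℕ} (mvec : Fin n → ℤ)
    (V : Fin n → MvPolynomial (Fin n) (Polynomial (AddMonoidAlgebra ℂ ℤ)))
    (Q : Fin n → EpsSeries (AmpRing n)) : Prop where
  coeff_zero : ∀ j, PowerSeries.coeff (R := ModeRing (AmpRing n)) 0 (Q j)
      = AddMonoidAlgebra.single (mvec j) (MvPolynomial.X (some j))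
  resonant_vanish : ∀ (j : Fin n) (k : ℕ), 1 ≤ k →
    MvPolynomial.aeval
      (fun v : Option (Fin n) => Option.elim v (0 : AmpRing n) (fun i => MvPolynomial.X (some i)))
      ((PowerSeries.coeff (R := ModeRing (AmpRing n)) k (Q j)).coeff (mvec j)) = 0
  ode : ∀ (j : Fin n) (m : ℤ),
    (PowerSeries.mk fun k =>
        MvPolynomial.pderiv none ((PowerSeries.coeff (R := ModeRing (AmpRing n)) k (Q j)).coeff m))
      + PowerSeries.C (MvPolynomial.C (Complex.I * ((m : ℂ) - (mvec j : ℂ)))) * Pc Q j m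
      = PowerSeries.mk fun k =>
          (PowerSeries.coeff (R := ModeRing (AmpRing n)) k
            (PowerSeries.X * VEval (AmpRing n) (V j) Q)).coeff m

/-- The polynomial ring `ℂ[t, s, A₁, …, Aₙ]`: `none` is `t`, `some none` is `s`,
`some (some i)` is `Aᵢ`. -/
abbrev AmpRing2 (n : ℕ) : Type := MvPolynomial (Option (Option (Fin n))) ℂ

/-- The inclusion `ℂ[t,A] → ℂ[t,s,A]`. -/
def embedTA {n : ℕ} : AmpRing n →+* AmpRing2 n :=
  (MvPolynomial.rename (Option.map (some : Fin n → Option (Fin n)))).toRingHom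

/-- The map `ℂ[t,A] → ℂ[t,s,A]` renaming `t` to `s`. -/
def renameTS {n : ℕ} : AmpRing n →+* AmpRing2 n :=
  (MvPolynomial.rename
    (fun v : Option (Fin n) => Option.elim v (some none) (fun i => some (some i)))).toRingHom

/-- Substitution of power series (with nontrivial `ε⁰`-part) for the coefficient variables of a
power series: `(substSeries φ p) = Σ_k ε^k · φ(coeff_k p)`; at each `ε`-order this is a finite
sum. -/
def substSeries {R R' : Type} [CommRing R] [CommRing R'] (φ : R →+* PowerSeries R')
    (p : PowerSeries R) : PowerSeries R' :=
  PowerSeries.mk fun K => ∑ k ∈ Finset.range (K + 1),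
    PowerSeries.coeff (R := R') (K - k) (φ (PowerSeries.coeff (R := R) k p))

/-- The renormalized amplitude `𝒜_i(ε,s,A) = P_{i,m_i}(ε,s,A)`, as an element of
`ℂ[t,s,A][[ε]]` (the `t`-variable of `P` renamed to `s`). -/
def renAmpS {n : ℕ} (mvec : Fin n → ℤ) (Q : Fin n → EpsSeries (AmpRing n)) (i : Fin n) :
    PowerSeries (AmpRing2 n) :=
  PowerSeries.map renameTS (Pc Q i (mvec i))

/-- The substitution `t ↦ t - s`, `A_i ↦ 𝒜_i(ε,s,A)`, as a ring map
`ℂ[t,A] → ℂ[t,s,A][[ε]]`. -/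
def substTA {n : ℕ} (mvec : Fin n → ℤ) (Q : Fin n → EpsSeries (AmpRing n)) :
    AmpRing n →+* PowerSeries (AmpRing2 n) :=
  MvPolynomial.eval₂Hom ((PowerSeries.C (R := AmpRing2 n)).comp MvPolynomial.C)
    (fun v : Option (Fin n) => Option.elim v
      (PowerSeries.C (MvPolynomial.X none - MvPolynomial.X (some none)))
      (fun i => renAmpS mvec Q i))

/-- Coefficientwise `∂_t` on `ℂ[t,A][[ε]]`. -/
def dT {n : ℕ} (p : PowerSeries (AmpRing n)) : PowerSeries (AmpRing n) :=
  PowerSeries.mk fun k => MvPolynomial.pderiv none (PowerSeries.coeff (R := AmpRing n) k p)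

/-- Coefficientwise `∂_s` on `ℂ[t,s,A][[ε]]`. -/
def dS {n : ℕ} (p : PowerSeries (AmpRing2 n)) : PowerSeries (AmpRing2 n) :=
  PowerSeries.mk fun k => MvPolynomial.pderiv (some none) (PowerSeries.coeff (R := AmpRing2 n) k p)

/-- Evaluation `s := 0`, a ring map `ℂ[t,s,A] → ℂ[t,A]`. -/
def evalS0 {n : ℕ} : AmpRing2 n →+* AmpRing n :=
  MvPolynomial.eval₂Hom MvPolynomial.C
    (fun v : Option (Option (Fin n)) => Option.elim v (MvPolynomial.X none)
      (fun w => Option.elim w 0 (fun i => MvPolynomial.X (some i))))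

/-- The substitution `t ↦ s`, `A_i ↦ 𝒜_i(ε,t,A)`, as a ring map `ℂ[t,A] → ℂ[t,s,A][[ε]]`. -/
def substSA {n : ℕ} (mvec : Fin n → ℤ) (Q : Fin n → EpsSeries (AmpRing n)) :
    AmpRing n →+* PowerSeries (AmpRing2 n) :=
  MvPolynomial.eval₂Hom ((PowerSeries.C (R := AmpRing2 n)).comp MvPolynomial.C)
    (fun v : Option (Fin n) => Option.elim v
      (PowerSeries.C (MvPolynomial.X (some none)))
      (fun i => PowerSeries.map embedTA (Pc Q i (mvec i))))

/-!
Both `Q(t + s, A)` and `Q(s, 𝒜(ε,t,A))` (Fourier modes kept) solve the system with `s` as time.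
Order by order in `ε` such a solution is determined by its resonant modes at `s = 0`: the forcing
`ε V` only involves lower orders, `∂_s + i(m - m_j)` is injective on polynomials for `m ≠ m_j`,
and for `m = m_j` a polynomial with vanishing `∂_s` equals its value at `s = 0`. Condition (c)
makes both resonant values at `s = 0` equal to `𝒜_j(ε,t,A)`, so the two families coincide, and
differentiating their resonant modes in `s` at `s = 0` gives the RG equation. The dynamics is
slow because the `ε⁰`-part `A_j` does not depend on `t`.
-/

section SubstSeries

variable {R R' : Type} [CommRing R] [CommRing R'] (φ : R →+* PowerSeries R')

lemma coeff_substSeries (p : PowerSeries R) (K : ℕ) :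
    PowerSeries.coeff K (substSeries φ p)
      = ∑ k ∈ Finset.range (K + 1), PowerSeries.coeff (K - k) (φ (PowerSeries.coeff k p)) :=
  PowerSeries.coeff_mk _ _

lemma coeff_eval₂_X_eq_zero {H : Polynomial R} {K : ℕ} (h : ∀ i ≤ K, H.coeff i = 0) :
    PowerSeries.coeff K (H.eval₂ φ PowerSeries.X) = 0 := by
  rw [Polynomial.eval₂_eq_sum_range, map_sum]
  refine Finset.sum_eq_zero fun i _ => ?_
  rw [PowerSeries.coeff_mul_X_pow']
  split_ifs with hi
  · rw [h i hi, map_zero, map_zero]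
  · rfl

lemma coeff_substSeries_eq_coeff_eval₂_trunc (p : PowerSeries R) {x K : ℕ} (hx : x ≤ K) :
    PowerSeries.coeff x (substSeries φ p)
      = PowerSeries.coeff x ((PowerSeries.trunc (K + 1) p).eval₂ φ PowerSeries.X) := by
  rw [Polynomial.eval₂_eq_sum_range' φ (PowerSeries.natDegree_trunc_lt p K), map_sum,
    coeff_substSeries]
  have hterm : ∀ i ∈ Finset.range (K + 1),
      PowerSeries.coeff x (φ ((PowerSeries.trunc (K + 1) p).coeff i) * PowerSeries.X ^ i)
        = if i ≤ x then PowerSeries.coeff (x - i) (φ (PowerSeries.coeff i p)) else 0 := by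
    intro i hi
    rw [PowerSeries.coeff_trunc, if_pos (Finset.mem_range.mp hi), PowerSeries.coeff_mul_X_pow']
  rw [Finset.sum_congr rfl hterm, Finset.sum_ite, Finset.sum_const_zero, add_zero]
  refine Finset.sum_congr (Finset.ext fun i => ?_) fun _ _ => rfl
  simp only [Finset.mem_filter, Finset.mem_range]
  omega

lemma coeff_substSeries_coe (G : Polynomial R) (K : ℕ) :
    PowerSeries.coeff K (substSeries φ G) = PowerSeries.coeff K (G.eval₂ φ PowerSeries.X) := by
  rw [coeff_substSeries_eq_coeff_eval₂_trunc φ _ le_rfl,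
    ← sub_eq_zero, ← map_sub, ← Polynomial.eval₂_sub]
  refine coeff_eval₂_X_eq_zero φ fun i hi => ?_
  rw [Polynomial.coeff_sub, PowerSeries.coeff_trunc, if_pos (Nat.lt_succ_of_le hi),
    Polynomial.coeff_coe, sub_self]

lemma substSeries_mul (p q : PowerSeries R) :
    substSeries φ (p * q) = substSeries φ p * substSeries φ q := by
  ext K
  rw [coeff_substSeries_eq_coeff_eval₂_trunc φ _ le_rfl, ← PowerSeries.trunc_trunc_mul_trunc,
    ← coeff_substSeries_eq_coeff_eval₂_trunc φ _ le_rfl, ← Polynomial.coe_mul,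
    coeff_substSeries_coe, Polynomial.eval₂_mul, PowerSeries.coeff_mul, PowerSeries.coeff_mul]
  refine Finset.sum_congr rfl fun xy hxy => ?_
  rw [Finset.HasAntidiagonal.mem_antidiagonal] at hxy
  rw [coeff_substSeries_eq_coeff_eval₂_trunc φ p (show xy.1 ≤ K by omega),
    coeff_substSeries_eq_coeff_eval₂_trunc φ q (show xy.2 ≤ K by omega)]

lemma substSeries_C (x : R) : substSeries φ (PowerSeries.C x) = φ x := by
  ext K
  rw [coeff_substSeries, Finset.sum_eq_single 0 (fun k _ hk => by
      rw [PowerSeries.coeff_C, if_neg hk, map_zero, map_zero])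
    (fun h => absurd (Finset.mem_range.mpr K.succ_pos) h),
    PowerSeries.coeff_zero_C, Nat.sub_zero]

lemma substSeries_X : substSeries φ PowerSeries.X = PowerSeries.X := by
  ext K
  rcases K with _ | K
  · simp [coeff_substSeries]
  rw [coeff_substSeries, Finset.sum_eq_single 1 (fun k _ hk => by
      rw [PowerSeries.coeff_X, if_neg hk, map_zero, map_zero]) (by simp),
    PowerSeries.coeff_X, if_pos rfl, map_one, PowerSeries.coeff_one, PowerSeries.coeff_X]
  simp

def substSeriesHom : PowerSeries R →+* PowerSeries R' where
  toFun := substSeries φ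
  map_one' := by rw [← map_one PowerSeries.C, substSeries_C, map_one]
  map_mul' := substSeries_mul φ
  map_zero' := by rw [← map_zero PowerSeries.C, substSeries_C, map_zero]
  map_add' p q := by
    ext K
    simp only [coeff_substSeries, map_add, Finset.sum_add_distrib]

lemma substSeriesHom_apply (p : PowerSeries R) : substSeriesHom φ p = substSeries φ p := rfl

lemma substSeries_comp {R₀ : Type} [CommRing R₀] (f : R₀ →+* R) (p : PowerSeries R₀) :
    substSeries (φ.comp f) p = substSeries φ (PowerSeries.map f p) := by
  ext K
  simp only [coeff_substSeries, RingHom.comp_apply, PowerSeries.coeff_map]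

lemma map_substSeries {R'' : Type} [CommRing R''] (g : R' →+* R'') (p : PowerSeries R) :
    PowerSeries.map g (substSeries φ p) = substSeries ((PowerSeries.map g).comp φ) p := by
  ext K
  simp only [coeff_substSeries, PowerSeries.coeff_map, map_sum, RingHom.comp_apply]

lemma substSeries_C_comp (f : R →+* R') (p : PowerSeries R) :
    substSeries (PowerSeries.C.comp f) p = PowerSeries.map f p := by
  ext K
  rw [coeff_substSeries, Finset.sum_eq_single K (fun k hk hkK => ?_) (by simp), Nat.sub_self,
    RingHom.comp_apply, PowerSeries.coeff_zero_C, PowerSeries.coeff_map]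
  rw [RingHom.comp_apply, PowerSeries.coeff_C, if_neg (by rw [Finset.mem_range] at hk; omega)]

end SubstSeries

section Modes

variable {R S : Type} [CommRing R] [CommRing S]

def modeSeries (m : ℤ) (y : EpsSeries R) : PowerSeries R :=
  PowerSeries.mk fun k => (PowerSeries.coeff k y).coeff m

lemma coeff_modeSeries (m : ℤ) (y : EpsSeries R) (k : ℕ) :
    PowerSeries.coeff k (modeSeries m y) = (PowerSeries.coeff k y).coeff m :=
  PowerSeries.coeff_mk _ _

lemma Pc_eq_modeSeries {n : ℕ} (Q : Fin n → EpsSeries (AmpRing n)) (j : Fin n) (m : ℤ) :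
    Pc Q j m = modeSeries m (Q j) :=
  rfl

/-- Extends `ψ : R →+* S⟦ε⟧` to Fourier sums, fixing every mode `e^{imt}`. -/
def modeSubst (ψ : R →+* PowerSeries S) : ModeRing R →+* PowerSeries (ModeRing S) :=
  AddMonoidAlgebra.liftNCRingHom
    ((PowerSeries.map (AddMonoidAlgebra.singleZeroRingHom : S →+* ModeRing S)).comp ψ)
    ((PowerSeries.C (R := ModeRing S)).toMonoidHom.comp (AddMonoidAlgebra.of S ℤ))
    (fun _ _ => Commute.all _ _)

lemma modeSeries_add (m : ℤ) (y y' : EpsSeries R) :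
    modeSeries m (y + y') = modeSeries m y + modeSeries m y' := by
  ext k
  simp only [coeff_modeSeries, map_add, AddMonoidAlgebra.coeff_add, Finsupp.add_apply]

lemma modeSubst_single (ψ : R →+* PowerSeries S) (m : ℤ) (r : R) :
    modeSubst ψ (AddMonoidAlgebra.single m r)
      = PowerSeries.map (AddMonoidAlgebra.singleZeroRingHom : S →+* ModeRing S) (ψ r)
        * PowerSeries.C (AddMonoidAlgebra.single m 1) := by
  simp only [modeSubst, AddMonoidAlgebra.liftNCRingHom]
  erw [AddMonoidAlgebra.liftNC_single]
  rfl

lemma modeSeries_modeSubst (ψ : R →+* PowerSeries S) (f : ModeRing R) (m : ℤ) :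
    modeSeries m (modeSubst ψ f) = ψ (f.coeff m) := by
  induction f using AddMonoidAlgebra.induction_linear with
  | zero => ext; simp [coeff_modeSeries]
  | add f g hf hg =>
    rw [map_add, modeSeries_add, hf, hg, AddMonoidAlgebra.coeff_add, Finsupp.add_apply, map_add]
  | single m' r =>
    ext k
    rw [coeff_modeSeries, modeSubst_single, PowerSeries.coeff_mul_C, PowerSeries.coeff_map]
    change (AddMonoidAlgebra.single (0 : ℤ) (PowerSeries.coeff k (ψ r))
      * AddMonoidAlgebra.single m' (1 : S)).coeff m = _
    rw [AddMonoidAlgebra.single_mul_single, zero_add, mul_one, AddMonoidAlgebra.coeff_single,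
      AddMonoidAlgebra.coeff_single, Finsupp.single_apply, Finsupp.single_apply]
    split_ifs
    · rfl
    · rw [map_zero, map_zero]

def epsSubst (ψ : R →+* PowerSeries S) : EpsSeries R →+* EpsSeries S :=
  substSeriesHom (modeSubst ψ)

lemma modeSeries_epsSubst (ψ : R →+* PowerSeries S) (y : EpsSeries R) (m : ℤ) :
    modeSeries m (epsSubst ψ y) = substSeries ψ (modeSeries m y) := by
  ext K
  rw [coeff_modeSeries, epsSubst, substSeriesHom_apply, coeff_substSeries, coeff_substSeries,
    AddMonoidAlgebra.coeff_sum, Finsupp.finsetSum_apply]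
  refine Finset.sum_congr rfl fun k _ => ?_
  rw [← coeff_modeSeries, modeSeries_modeSubst, coeff_modeSeries]

lemma epsSubst_C (ψ : R →+* PowerSeries S) (x : ModeRing R) :
    epsSubst ψ (PowerSeries.C x) = modeSubst ψ x :=
  substSeries_C _ x

lemma epsSubst_X (ψ : R →+* PowerSeries S) : epsSubst ψ PowerSeries.X = PowerSeries.X :=
  substSeries_X _

lemma map_epsSubst_zUnit (ψ : R →+* PowerSeries S) :
    Units.map (epsSubst ψ).toMonoidHom (zUnit R) = zUnit S := by
  refine Units.ext ?_
  change epsSubst ψ (PowerSeries.C (AddMonoidAlgebra.single 1 1)) = _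
  rw [epsSubst_C, modeSubst_single, map_one, map_one, one_mul]
  rfl

variable [Algebra ℂ R] [Algebra ℂ S]

lemma zEval_single_zero (b : ℂ) :
    zEval R (AddMonoidAlgebra.single 0 b)
      = PowerSeries.C (AddMonoidAlgebra.single 0 (algebraMap ℂ R b)) := by
  simp only [zEval, AddMonoidAlgebra.liftNCRingHom]
  erw [AddMonoidAlgebra.liftNC_single]
  simp only [Function.comp_apply, MonoidHom.coe_comp, Units.coeHom_apply, zpowersHom_apply,
    toAdd_ofAdd, zpow_zero, Units.val_one, mul_one]
  rfl

lemma zEval_single_one (a : ℤ) :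
    zEval R (AddMonoidAlgebra.single a 1) = ((zUnit R ^ a : (EpsSeries R)ˣ) : EpsSeries R) := by
  simp only [zEval, AddMonoidAlgebra.liftNCRingHom]
  erw [AddMonoidAlgebra.liftNC_single]
  simp only [MonoidHom.coe_comp, Function.comp_apply, Units.coeHom_apply, zpowersHom_apply,
    toAdd_ofAdd, AddMonoidHom.coe_coe, map_one, one_mul]

lemma epsSubst_comp_zEval {ψ : R →+* PowerSeries S}
    (hψ : ∀ c : ℂ, ψ (algebraMap ℂ R c) = PowerSeries.C (algebraMap ℂ S c)) :
    (epsSubst ψ).comp (zEval R) = zEval S := by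
  refine AddMonoidAlgebra.ringHom_ext (fun b => ?_) (fun a => ?_)
  · rw [RingHom.comp_apply, zEval_single_zero, zEval_single_zero, epsSubst_C, modeSubst_single,
      hψ, PowerSeries.map_C, ← AddMonoidAlgebra.one_def, map_one, mul_one]
    rfl
  · rw [RingHom.comp_apply, zEval_single_one, zEval_single_one]
    change ((Units.map (epsSubst ψ).toMonoidHom (zUnit R ^ a) : (EpsSeries S)ˣ) : EpsSeries S) = _
    rw [map_zpow, map_epsSubst_zUnit]

lemma epsSubst_VEval {ψ : R →+* PowerSeries S}
    (hψ : ∀ c : ℂ, ψ (algebraMap ℂ R c) = PowerSeries.C (algebraMap ℂ S c)) {n : ℕ}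
    (V : MvPolynomial (Fin n) (Polynomial (AddMonoidAlgebra ℂ ℤ))) (y : Fin n → EpsSeries R) :
    epsSubst ψ (VEval R V y) = VEval S V (fun l => epsSubst ψ (y l)) := by
  rw [VEval, MvPolynomial.eval₂_comp_left]
  congr 1
  refine RingHom.ext fun q => ?_
  rw [RingHom.comp_apply, Polynomial.coe_eval₂RingHom, Polynomial.coe_eval₂RingHom,
    Polynomial.hom_eval₂, epsSubst_comp_zEval hψ, epsSubst_X]

end Modes

namespace MvPolynomial

lemma eval₂_sub_eval₂_mem {σ R S : Type} [CommSemiring R] [CommRing S]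
    (f : R →+* S) (I : Ideal S) {x y : σ → S} (h : ∀ i, x i - y i ∈ I)
    (p : MvPolynomial σ R) :
    p.eval₂ f x - p.eval₂ f y ∈ I := by
  rw [← Ideal.Quotient.eq, eval₂_comp_left, eval₂_comp_left]
  have hxy : Ideal.Quotient.mk I ∘ x = Ideal.Quotient.mk I ∘ y :=
    _root_.funext fun i => Ideal.Quotient.eq.mpr (h i)
  rw [hxy]

variable {σ R : Type} [CommRing R] [NoZeroDivisors R] {v : σ} {p : MvPolynomial σ R}

lemma eq_zero_of_pderiv_add_C_mul_eq_zero {c : R} (hc : c ≠ 0)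
    (h : pderiv v p + C c * p = 0) : p = 0 := by
  classical
  have hrec (ν : σ →₀ ℕ) :
      coeff (ν + Finsupp.single v 1) p * ((ν v : R) + 1) + c * coeff ν p = 0 := by
    simpa only [coeff_add, coeff_C_mul, coeff_pderiv, coeff_zero] using congrArg (coeff ν) h
  -- descending induction on the exponent of `v`, starting above `degreeOf v p`
  have hvanish (i : ℕ) : ∀ ν : σ →₀ ℕ, degreeOf v p < ν v + i → coeff ν p = 0 := by
    induction i with
    | zero => exact fun ν hν => notMem_support_iff.mp (notMem_support_of_degreeOf_lt v hν)
    | succ i ih =>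
      intro ν hν
      have hnext := ih (ν + Finsupp.single v 1)
        (by rw [Finsupp.add_apply, Finsupp.single_eq_same]; omega)
      simpa [hnext, hc] using hrec ν
  ext ν
  exact hvanish (degreeOf v p + 1) ν (by omega)

variable [CharZero R]

lemma notMem_vars_of_pderiv_eq_zero (h : pderiv v p = 0) : v ∉ p.vars := by
  intro hv
  obtain ⟨ν, hν, hνv⟩ := (mem_vars_iff_mem_support v).mp hv
  have hcoeff := congrArg (coeff (ν - Finsupp.single v 1)) h
  rw [coeff_pderiv, coeff_zero, tsub_add_cancel_of_le (Finsupp.single_le_iff.mpr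
    (Nat.one_le_iff_ne_zero.mpr (Finsupp.mem_support_iff.mp hνv)))] at hcoeff
  have hne : (((ν - Finsupp.single v 1 : σ →₀ ℕ) v : ℕ) : R) + 1 ≠ 0 :=
    Nat.cast_add_one_ne_zero _
  exact mem_support_iff.mp hν ((mul_eq_zero.mp hcoeff).resolve_right hne)

abbrev evalVarZero [DecidableEq σ] (v : σ) : MvPolynomial σ R →+* MvPolynomial σ R :=
  eval₂Hom C (Function.update X v 0)

lemma evalVarZero_of_pderiv_eq_zero [DecidableEq σ] (h : pderiv v p = 0) :
    evalVarZero v p = p := by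
  refine (hom_congr_vars (f₂ := RingHom.id _) (by ext; simp) (fun w hw _ => ?_) rfl).trans rfl
  have hwv : w ≠ v := fun hwv => notMem_vars_of_pderiv_eq_zero h (hwv ▸ hw)
  simp [Function.update_of_ne hwv]

end MvPolynomial

lemma X_pow_dvd_VEval_sub {R : Type} [CommRing R] [Algebra ℂ R] {n K : ℕ}
    (V : MvPolynomial (Fin n) (Polynomial (AddMonoidAlgebra ℂ ℤ)))
    {y y' : Fin n → EpsSeries R}
    (h : ∀ l, PowerSeries.X ^ K ∣ y l - y' l) :
    PowerSeries.X ^ K ∣ VEval R V y - VEval R V y' := by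
  simp only [← Ideal.mem_span_singleton] at h ⊢
  exact MvPolynomial.eval₂_sub_eval₂_mem _ _ h V

section PartialDerivative

open MvPolynomial hiding C

variable {σ τ R : Type} [CommRing R]

/-- `dT` and `dS` are `pdSeries none` and `pdSeries (some none)`. -/
def pdSeries (v : σ) (q : PowerSeries (MvPolynomial σ R)) : PowerSeries (MvPolynomial σ R) :=
  PowerSeries.mk fun k => pderiv v (PowerSeries.coeff k q)

lemma coeff_pdSeries (v : σ) (q : PowerSeries (MvPolynomial σ R)) (k : ℕ) :
    PowerSeries.coeff k (pdSeries v q) = pderiv v (PowerSeries.coeff k q) :=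
  PowerSeries.coeff_mk _ _

lemma pdSeries_add (v : σ) (q r : PowerSeries (MvPolynomial σ R)) :
    pdSeries v (q + r) = pdSeries v q + pdSeries v r := by
  ext k
  simp only [coeff_pdSeries, map_add]

lemma pdSeries_mul (v : σ) (q r : PowerSeries (MvPolynomial σ R)) :
    pdSeries v (q * r) = pdSeries v q * r + q * pdSeries v r := by
  ext k
  simp only [coeff_pdSeries, PowerSeries.coeff_mul, map_add, map_sum, pderiv_mul,
    Finset.sum_add_distrib]

lemma pdSeries_C (v : σ) (x : MvPolynomial σ R) :
    pdSeries v (PowerSeries.C x) = PowerSeries.C (pderiv v x) := by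
  ext k
  rw [coeff_pdSeries, PowerSeries.coeff_C, PowerSeries.coeff_C]
  split_ifs <;> simp

lemma pdSeries_ringHom_eq_ringHom_pderiv (u : τ) (v : σ)
    (ψ : MvPolynomial τ R →+* PowerSeries (MvPolynomial σ R))
    (hC : ∀ a, ψ (MvPolynomial.C a) = PowerSeries.C (MvPolynomial.C a))
    (hu : pdSeries v (ψ (X u)) = 1)
    (hne : ∀ w ≠ u, pdSeries v (ψ (X w)) = 0) (p : MvPolynomial τ R) :
    pdSeries v (ψ p) = ψ (pderiv u p) := by
  induction p using MvPolynomial.induction_on with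
  | C a => rw [hC, pdSeries_C, pderiv_C, pderiv_C, map_zero, map_zero]
  | add p q hp hq => rw [map_add, pdSeries_add, hp, hq, map_add, map_add]
  | mul_X p w hp =>
    rw [map_mul, pdSeries_mul, hp, pderiv_mul, map_add, map_mul, map_mul]
    congr 1
    by_cases hw : w = u
    · rw [hw, hu, pderiv_X_self, map_one]
    · rw [hne w hw, pderiv_X_of_ne hw, map_zero]

lemma pdSeries_substSeries {u : τ} {v : σ}
    {ψ : MvPolynomial τ R →+* PowerSeries (MvPolynomial σ R)}
    (hψ : ∀ p, pdSeries v (ψ p) = ψ (pderiv u p)) (q : PowerSeries (MvPolynomial τ R)) :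
    pdSeries v (substSeries ψ q) = substSeries ψ (pdSeries u q) := by
  ext K
  simp only [coeff_pdSeries, coeff_substSeries, map_sum, ← hψ]

end PartialDerivative

section ModeODE

variable {σ τ : Type} {n : ℕ} (mvec : Fin n → ℤ)
  (V : Fin n → MvPolynomial (Fin n) (Polynomial (AddMonoidAlgebra ℂ ℤ)))

/-- Condition (d) of `IsSecularFamily`, with the time variable `v` and values in `ℂ[σ]`. -/
def SolvesModeODE (v : σ) (Y : Fin n → EpsSeries (MvPolynomial σ ℂ)) : Prop :=
  ∀ l m, pdSeries v (modeSeries m (Y l))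
        + PowerSeries.C (MvPolynomial.C (Complex.I * ((m : ℂ) - (mvec l : ℂ))))
          * modeSeries m (Y l)
    = modeSeries m (PowerSeries.X * VEval (MvPolynomial σ ℂ) (V l) Y)

variable {mvec V}

lemma IsSecularFamily.solvesModeODE {Q : Fin n → EpsSeries (AmpRing n)}
    (hQ : IsSecularFamily mvec V Q) : SolvesModeODE mvec V none Q := by
  intro l m
  have hpd : pdSeries none (modeSeries m (Q l))
      = PowerSeries.mk fun k => MvPolynomial.pderiv none ((PowerSeries.coeff k (Q l)).coeff m) := by
    ext k
    rw [coeff_pdSeries, coeff_modeSeries, PowerSeries.coeff_mk]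
  rw [hpd]
  exact hQ.ode l m

lemma SolvesModeODE.comp_epsSubst {u : τ} {v : σ} {Y : Fin n → EpsSeries (MvPolynomial τ ℂ)}
    (hY : SolvesModeODE mvec V u Y)
    (ψ : MvPolynomial τ ℂ →+* PowerSeries (MvPolynomial σ ℂ))
    (hC : ∀ a, ψ (MvPolynomial.C a) = PowerSeries.C (MvPolynomial.C a))
    (hD : ∀ p, pdSeries v (ψ p) = ψ (MvPolynomial.pderiv u p)) :
    SolvesModeODE mvec V v (fun l => epsSubst ψ (Y l)) := by
  intro l m
  have h := congrArg (substSeriesHom ψ) (hY l m)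
  rwa [map_add, map_mul, substSeriesHom_apply, substSeriesHom_apply, substSeriesHom_apply,
    substSeriesHom_apply, substSeries_C, hC, ← pdSeries_substSeries hD,
    ← modeSeries_epsSubst, ← modeSeries_epsSubst, map_mul (epsSubst ψ), epsSubst_X,
    epsSubst_VEval (fun c => by simpa only [MvPolynomial.algebraMap_eq] using hC c)] at h

variable [DecidableEq σ] {v : σ} {Y Y' : Fin n → EpsSeries (MvPolynomial σ ℂ)}

lemma SolvesModeODE.coeff_eq_of_X_pow_dvd (hY : SolvesModeODE mvec V v Y)
    (hY' : SolvesModeODE mvec V v Y')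
    (h0 : ∀ l, PowerSeries.map (MvPolynomial.evalVarZero v) (modeSeries (mvec l) (Y l))
      = PowerSeries.map (MvPolynomial.evalVarZero v) (modeSeries (mvec l) (Y' l)))
    {K : ℕ} (hK : ∀ l, PowerSeries.X ^ K ∣ Y l - Y' l) (l : Fin n) :
    PowerSeries.coeff K (Y l) = PowerSeries.coeff K (Y' l) := by
  ext m : 1
  set c := Complex.I * ((m : ℂ) - (mvec l : ℂ))
  have hode (Z : Fin n → EpsSeries (MvPolynomial σ ℂ)) (hZ : SolvesModeODE mvec V v Z) :
      MvPolynomial.pderiv v (PowerSeries.coeff K (modeSeries m (Z l)))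
          + MvPolynomial.C c * PowerSeries.coeff K (modeSeries m (Z l))
        = PowerSeries.coeff K (modeSeries m (PowerSeries.X * VEval _ (V l) Z)) := by
    rw [← coeff_pdSeries, ← PowerSeries.coeff_C_mul, ← map_add, hZ l m]
  -- the forcing term is `ε` times a function of `Y`, so at order `K` it only sees orders `< K`
  have hforce : PowerSeries.coeff K (modeSeries m (PowerSeries.X * VEval _ (V l) Y))
      = PowerSeries.coeff K (modeSeries m (PowerSeries.X * VEval _ (V l) Y')) := by
    have hdvd : PowerSeries.X ^ (K + 1)
        ∣ PowerSeries.X * VEval _ (V l) Y - PowerSeries.X * VEval _ (V l) Y' := by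
      rw [pow_succ', ← mul_sub]
      exact mul_dvd_mul_left _ (X_pow_dvd_VEval_sub (V l) hK)
    have hK := PowerSeries.X_pow_dvd_iff.mp hdvd K K.lt_succ_self
    rw [map_sub, sub_eq_zero] at hK
    rw [coeff_modeSeries, coeff_modeSeries, hK]
  set d := modeSeries m (Y l) - modeSeries m (Y' l)
  have hdiff : MvPolynomial.pderiv v (PowerSeries.coeff K d)
      + MvPolynomial.C c * PowerSeries.coeff K d = 0 := by
    rw [map_sub, map_sub]
    linear_combination hode Y hY - hode Y' hY' + hforce
  rw [← coeff_modeSeries, ← coeff_modeSeries, ← sub_eq_zero, ← map_sub]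
  by_cases hm : m = mvec l
  · have hc : c = 0 := by simp [c, hm]
    rw [hc, map_zero, zero_mul, add_zero] at hdiff
    rw [← MvPolynomial.evalVarZero_of_pderiv_eq_zero hdiff, map_sub, map_sub,
      ← PowerSeries.coeff_map, ← PowerSeries.coeff_map, hm, h0 l, sub_self]
  · have hc : c ≠ 0 := mul_ne_zero Complex.I_ne_zero (sub_ne_zero.mpr (by exact_mod_cast hm))
    exact MvPolynomial.eq_zero_of_pderiv_add_C_mul_eq_zero hc hdiff

theorem SolvesModeODE.unique (hY : SolvesModeODE mvec V v Y) (hY' : SolvesModeODE mvec V v Y')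
    (h0 : ∀ l, PowerSeries.map (MvPolynomial.evalVarZero v) (modeSeries (mvec l) (Y l))
      = PowerSeries.map (MvPolynomial.evalVarZero v) (modeSeries (mvec l) (Y' l))) :
    Y = Y' := by
  have hdvd (K : ℕ) : ∀ l, PowerSeries.X ^ K ∣ Y l - Y' l := by
    induction K with
    | zero => simp
    | succ K ih =>
      intro l
      refine PowerSeries.X_pow_dvd_iff.mpr fun d hd => ?_
      rcases Nat.lt_succ_iff_lt_or_eq.mp hd with hd | rfl
      · exact PowerSeries.X_pow_dvd_iff.mp (ih l) d hd
      · rw [map_sub, hY.coeff_eq_of_X_pow_dvd hY' h0 ih l, sub_self]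
  funext l
  ext K : 1
  rw [← sub_eq_zero, ← map_sub]
  exact PowerSeries.X_pow_dvd_iff.mp (hdvd (K + 1) l) K K.lt_succ_self

end ModeODE

section Renormalization

variable {n : ℕ} {mvec : Fin n → ℤ}
  {V : Fin n → MvPolynomial (Fin n) (Polynomial (AddMonoidAlgebra ℂ ℤ))}
  {Q : Fin n → EpsSeries (AmpRing n)}

/-- The substitution `t ↦ t + s` from `ℂ[t,A]` to `ℂ[t,s,A]`. -/
def shiftTS : AmpRing n →+* AmpRing2 n :=
  MvPolynomial.eval₂Hom MvPolynomial.C fun v => Option.elim v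
    (MvPolynomial.X none + MvPolynomial.X (some none)) fun i => MvPolynomial.X (some (some i))

abbrev evalSZero : AmpRing2 n →+* AmpRing2 n :=
  MvPolynomial.evalVarZero (some none)

abbrev evalTZero : AmpRing n →+* AmpRing n :=
  (MvPolynomial.aeval fun v : Option (Fin n) =>
    Option.elim v (0 : AmpRing n) fun i => MvPolynomial.X (some i)).toRingHom

lemma evalSZero_comp_shiftTS : (evalSZero (n := n)).comp shiftTS = embedTA := by
  ext v <;> cases v <;> simp [shiftTS, embedTA]

lemma evalSZero_comp_embedTA : (evalSZero (n := n)).comp embedTA = embedTA := by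
  ext v <;> cases v <;> simp [embedTA]

lemma evalS0_comp_shiftTS : (evalS0 (n := n)).comp shiftTS = RingHom.id _ := by
  ext v <;> cases v <;> simp [evalS0, shiftTS]

lemma pderiv_s_embedTA (x : AmpRing n) : MvPolynomial.pderiv (some none) (embedTA x) = 0 := by
  refine MvPolynomial.pderiv_eq_zero_of_notMem_vars fun hmem => ?_
  obtain ⟨w, -, hw⟩ := MvPolynomial.mem_vars_rename _ x hmem
  cases w <;> simp at hw

lemma pdSeries_C_shiftTS (p : AmpRing n) :
    pdSeries (some none) (PowerSeries.C (shiftTS p))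
      = PowerSeries.C (shiftTS (MvPolynomial.pderiv none p)) := by
  refine pdSeries_ringHom_eq_ringHom_pderiv none (some none) (PowerSeries.C.comp shiftTS)
    (fun a => by simp [shiftTS]) (by simp [shiftTS, pdSeries_add, pdSeries_C]) (fun w hw => ?_) p
  obtain ⟨i, rfl⟩ := Option.ne_none_iff_exists'.mp hw
  simp [shiftTS, pdSeries_C]

lemma pdSeries_substSA (p : AmpRing n) :
    pdSeries (some none) (substSA mvec Q p) = substSA mvec Q (MvPolynomial.pderiv none p) := by
  refine pdSeries_ringHom_eq_ringHom_pderiv none (some none) (substSA mvec Q)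
    (fun a => by simp [substSA]) (by simp [substSA, pdSeries_C]) (fun w hw => ?_) p
  obtain ⟨i, rfl⟩ := Option.ne_none_iff_exists'.mp hw
  ext k
  simp [substSA, coeff_pdSeries, pderiv_s_embedTA]

lemma IsSecularFamily.map_evalTZero_resonant (hQ : IsSecularFamily mvec V Q) (l : Fin n) :
    PowerSeries.map evalTZero (Pc Q l (mvec l)) = PowerSeries.C (MvPolynomial.X (some l)) := by
  ext k : 1
  rw [PowerSeries.coeff_map, Pc, PowerSeries.coeff_mk, PowerSeries.coeff_C]
  rcases k with _ | k
  · rw [if_pos rfl, hQ.coeff_zero l, AddMonoidAlgebra.coeff_single, Finsupp.single_eq_same]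
    simp
  · rw [if_neg k.succ_ne_zero]
    exact hQ.resonant_vanish l (k + 1) k.succ_pos

lemma map_evalSZero_comp_substSA :
    (PowerSeries.map evalSZero).comp (substSA mvec Q)
      = ((PowerSeries.map evalSZero).comp (substSA mvec Q)).comp evalTZero := by
  ext v <;> cases v <;> simp [substSA]

lemma IsSecularFamily.epsSubst_shiftTS_eq_epsSubst_substSA (hQ : IsSecularFamily mvec V Q) :
    (fun l => epsSubst (PowerSeries.C.comp shiftTS) (Q l))
      = fun l => epsSubst (substSA mvec Q) (Q l) := by
  refine SolvesModeODE.unique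
    (hQ.solvesModeODE.comp_epsSubst _ (fun a => by simp [shiftTS]) pdSeries_C_shiftTS)
    (hQ.solvesModeODE.comp_epsSubst _ (fun a => by simp [substSA]) pdSeries_substSA) fun l => ?_
  calc PowerSeries.map evalSZero
        (modeSeries (mvec l) (epsSubst (PowerSeries.C.comp shiftTS) (Q l)))
      = PowerSeries.map embedTA (Pc Q l (mvec l)) := by
        rw [modeSeries_epsSubst, substSeries_C_comp, ← RingHom.comp_apply,
          ← PowerSeries.map_comp, evalSZero_comp_shiftTS]
        rfl
    _ = PowerSeries.map evalSZero (modeSeries (mvec l) (epsSubst (substSA mvec Q) (Q l))) := by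
        have hA : substSA mvec Q (MvPolynomial.X (some l))
            = PowerSeries.map embedTA (Pc Q l (mvec l)) := by
          simp [substSA]
        rw [modeSeries_epsSubst, map_substSeries, map_evalSZero_comp_substSA, substSeries_comp,
          ← Pc_eq_modeSeries, hQ.map_evalTZero_resonant, substSeries_C, RingHom.comp_apply, hA,
          ← RingHom.comp_apply, ← PowerSeries.map_comp, evalSZero_comp_embedTA]

lemma IsSecularFamily.dT_resonant (hQ : IsSecularFamily mvec V Q) (j : Fin n) :
    dT (Pc Q j (mvec j))
      = PowerSeries.map evalS0 (dS (substSeries (substSA mvec Q) (Pc Q j (mvec j)))) :=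
  calc dT (Pc Q j (mvec j))
      = PowerSeries.map (evalS0.comp shiftTS) (pdSeries none (Pc Q j (mvec j))) := by
        rw [evalS0_comp_shiftTS, PowerSeries.map_id]
        rfl
    _ = PowerSeries.map evalS0 (pdSeries (some none)
          (modeSeries (mvec j) (epsSubst (PowerSeries.C.comp shiftTS) (Q j)))) := by
        rw [modeSeries_epsSubst, pdSeries_substSeries (ψ := PowerSeries.C.comp shiftTS)
          pdSeries_C_shiftTS, substSeries_C_comp, PowerSeries.map_comp, RingHom.comp_apply,
          Pc_eq_modeSeries]
    _ = PowerSeries.map evalS0 (dS (substSeries (substSA mvec Q) (Pc Q j (mvec j)))) := by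
        rw [congrFun hQ.epsSubst_shiftTS_eq_epsSubst_substSA j, modeSeries_epsSubst,
          Pc_eq_modeSeries]
        rfl

lemma IsSecularFamily.X_dvd_dT_resonant (hQ : IsSecularFamily mvec V Q) (j : Fin n) :
    PowerSeries.X ∣ dT (Pc Q j (mvec j)) := by
  rw [PowerSeries.X_dvd_iff, ← PowerSeries.coeff_zero_eq_constantCoeff_apply, dT,
    PowerSeries.coeff_mk, Pc, PowerSeries.coeff_mk, hQ.coeff_zero j,
    AddMonoidAlgebra.coeff_single, Finsupp.single_eq_same, MvPolynomial.pderiv_X_of_ne (by simp)]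

end Renormalization

theorem RG_equation_general {n : ℕ} (mvec : Fin n → ℤ)
    (V : Fin n → MvPolynomial (Fin n) (Polynomial (AddMonoidAlgebra ℂ ℤ)))
    (Q : Fin n → EpsSeries (AmpRing n))
    (hQ : IsSecularFamily mvec V Q) :
    ∀ j : Fin n,
      dT (Pc Q j (mvec j))
          = PowerSeries.map evalS0 (dS (substSeries (substSA mvec Q) (Pc Q j (mvec j))))
        ∧ PowerSeries.X ∣ dT (Pc Q j (mvec j))
        ∧ PowerSeries.X ∣
            PowerSeries.map evalS0 (dS (substSeries (substSA mvec Q) (Pc Q j (mvec j)))) := by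
  intro j
  have hRG := hQ.dT_resonant j
  exact ⟨hRG, hQ.X_dvd_dT_resonant j, hRG ▸ hQ.X_dvd_dT_resonant j⟩

/-- the RG equation, semisimple case: the renormalized amplitudes
`𝒜_j(ε,t,A) = P_{j,m_j}(ε,t,A)` satisfy
`∂_t 𝒜_j(ε,t,A) = [∂_s P_{j,m_j}(ε, s, 𝒜(ε,t,A))]|_{s=0}` in `ℂ[t,A][[ε]]`, and both sides
are divisible by `ε` (slow dynamics). -/
theorem RG_equation {n : ℕ} (hn : 0 < n) (mvec : Fin n → ℤ)
    (V : Fin n → MvPolynomial (Fin n) (Polynomial (AddMonoidAlgebra ℂ ℤ)))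
    (Q : Fin n → EpsSeries (AmpRing n))
    (hQ : IsSecularFamily mvec V Q) :
    ∀ j : Fin n,
      dT (Pc Q j (mvec j))
          = PowerSeries.map evalS0 (dS (substSeries (substSA mvec Q) (Pc Q j (mvec j))))
        ∧ PowerSeries.X ∣ dT (Pc Q j (mvec j))
        ∧ PowerSeries.X ∣
            PowerSeries.map evalS0 (dS (substSeries (substSA mvec Q) (Pc Q j (mvec j)))) :=
  RG_equation_general mvec V Q hQ

end
end

section
/- Let {P_{j,m}(ε,t,A)} be a secular-coefficient family, and assume in addition that the system is autonomous, i.e. each V_j does not involve z, z⁻¹ (V_j ∈ ℂ[ε, y_1,…,y_n]). Then for every u ∈ ℝ and all 1 ≤ j ≤ n, m ∈ ℤ: P_{j,m}(ε, t, A) = e^{imu} · P_{j,m}(ε, t, (e^{−i m_1 u} A_1, …, e^{−i m_n u} A_n)), where for each ε-order the two sides are equal as polynomial functions of (t, A) ∈ ℝ × ℂⁿ. Equivalently, every monomial ε^k t^l A_1^{r_1}⋯A_n^{r_n} occurring with nonzero coefficient in P_{j,m} satisfies r_1 m_1 + ⋯ + r_n m_n = m. -/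
noncomputable section

open Polynomial

/-- Evaluation of an element of `ℂ[t,A]` at a point `(t, A) ∈ ℝ × ℂⁿ`. -/
def evalPt {n : ℕ} (t : ℝ) (A : Fin n → ℂ) (p : AmpRing n) : ℂ :=
  MvPolynomial.eval (fun v : Option (Fin n) => Option.elim v (t : ℂ) A) p

/-!
Give `t` weight `0` and `Aᵢ` weight `mᵢ`. The series whose `e^{imt}`-coefficient is weighted
homogeneous of degree `m` at every `ε`-order below `N` form a subring containing `ε` and the
constants, so for autonomous `V` the forcing term `ε V_j(ε, y)` inherits this property from `y`
one order higher. Inductively, each new coefficient `P` solves `∂ₜP + i(m - m_j)P = F` with `F`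
homogeneous; since `∂ₜ` preserves weights, the off-degree part of `P` solves the homogeneous
equation, and it vanishes: for `m ≠ m_j` by looking at its top power of `t`, for `m = m_j` because
it is `t`-independent and vanishes at `t = 0`. The rotation identity is homogeneity evaluated at
`Aᵢ ↦ e^{-i mᵢ u} Aᵢ`.
-/

namespace MvPolynomial

lemma coeff_aeval_elim_zero {σ R : Type*} [CommSemiring R] (p : MvPolynomial (Option σ) R)
    {d : Option σ →₀ ℕ} (hd : d none = 0) :
    coeff d (aeval (fun v : Option σ => Option.elim v (0 : MvPolynomial (Option σ) R)
      fun i => X (some i)) p) = coeff d p := by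
  classical
  induction p using MvPolynomial.induction_on generalizing d with
  | C a => simp
  | add p q hp hq => rw [map_add, coeff_add, coeff_add, hp hd, hq hd]
  | mul_X p v hp =>
    cases v with
    | none => simp [coeff_mul_X', hd]
    | some i =>
      simp only [map_mul, aeval_X, Option.elim, coeff_mul_X']
      split_ifs
      · exact hp (by simp [hd])
      · rfl

variable {σ K M : Type*} [CommRing K] [IsDomain K] [CharZero K] [AddCommMonoid M]

theorem isWeightedHomogeneous_of_pderiv_add_C_mul {w : σ → M} {i : σ} (hi : w i = 0) {m : M}
    {c : K} {P F : MvPolynomial σ K} (hPF : pderiv i P + C c * P = F)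
    (hF : IsWeightedHomogeneous w F m)
    (hres : c = 0 → ∀ d : σ →₀ ℕ, d i = 0 → coeff d P = 0) :
    IsWeightedHomogeneous w P m := by
  classical
  have hrec : ∀ d, Finsupp.weight w d ≠ m →
      coeff (d + Finsupp.single i 1) P * (d i + 1) + c * coeff d P = 0 := by
    intro d hd
    rw [← coeff_pderiv, ← coeff_C_mul, ← coeff_add, hPF]
    exact hF.coeff_eq_zero d hd
  have hshift : ∀ d, Finsupp.weight w (d + Finsupp.single i 1) = Finsupp.weight w d := by
    simp [Finsupp.weight_single, hi]
  by_contra hP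
  simp only [IsWeightedHomogeneous, not_forall] at hP
  obtain ⟨d, hdP, hdm⟩ := hP
  rcases eq_or_ne c 0 with rfl | hc
  · obtain ⟨e, rfl⟩ : ∃ e, d = e + Finsupp.single i 1 := by
      have hdi : d i ≠ 0 := fun h => hdP (hres rfl d h)
      exact ⟨d - Finsupp.single i 1,
        (tsub_add_cancel_of_le (Finsupp.single_le_iff.mpr (Nat.one_le_iff_ne_zero.mpr hdi))).symm⟩
    rw [hshift] at hdm
    simpa [Nat.cast_add_one_ne_zero, hdP] using hrec e hdm
  · -- an off-degree monomial of `P` with maximal exponent of `X i`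
    obtain ⟨e, he, hmax⟩ :=
      (P.support.filter fun e => Finsupp.weight w e ≠ m).exists_max_image (· i)
        ⟨d, by simp [hdP, hdm]⟩
    simp only [Finset.mem_filter, mem_support_iff] at he hmax
    have hnext : coeff (e + Finsupp.single i 1) P = 0 := by
      by_contra h
      have := hmax _ ⟨h, by rw [hshift]; exact he.2⟩
      simp at this
    simpa [hnext, hc, he.1] using hrec e he.2

end MvPolynomial

section Diagonal

variable {R σ M : Type*} [CommRing R] [AddCommMonoid M]

open MvPolynomial

def diagonalSubring (w : σ → M) : Subring (AddMonoidAlgebra (MvPolynomial σ R) M) where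
  carrier := {x | ∀ m, IsWeightedHomogeneous w (x.coeff m) m}
  zero_mem' m := isWeightedHomogeneous_zero _ w m
  one_mem' m := by
    classical
    rw [AddMonoidAlgebra.one_def, AddMonoidAlgebra.coeff_single, Finsupp.single_apply]
    split_ifs with h
    · exact h ▸ isWeightedHomogeneous_one R w
    · exact isWeightedHomogeneous_zero _ w m
  add_mem' hx hy m := (hx m).add (hy m)
  neg_mem' hx m := (hx m).neg
  mul_mem' {x y} hx hy m := by
    classical
    rw [AddMonoidAlgebra.coeff_mul]
    refine IsWeightedHomogeneous.sum _ _ _ fun a _ => IsWeightedHomogeneous.sum _ _ _ fun b _ => ?_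
    dsimp only
    split_ifs with h
    · exact h ▸ (hx a).mul (hy b)
    · exact isWeightedHomogeneous_zero _ w m

lemma single_mem_diagonalSubring {w : σ → M} {m : M} {p : MvPolynomial σ R}
    (hp : IsWeightedHomogeneous w p m) : AddMonoidAlgebra.single m p ∈ diagonalSubring w := by
  classical
  intro m'
  rw [AddMonoidAlgebra.coeff_single, Finsupp.single_apply]
  split_ifs with h
  · exact h ▸ hp
  · exact isWeightedHomogeneous_zero _ w m'

end Diagonal

namespace PowerSeries

variable {A : Type*} [CommRing A]

def truncSubring (S : Subring A) (N : ℕ) : Subring A⟦X⟧ where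
  carrier := {f | ∀ k < N, coeff k f ∈ S}
  zero_mem' _ _ := by simp
  one_mem' k _ := by
    rw [coeff_one]
    split_ifs
    exacts [S.one_mem, S.zero_mem]
  add_mem' hf hg k hk := by simpa using S.add_mem (hf k hk) (hg k hk)
  neg_mem' hf k hk := by simpa using S.neg_mem (hf k hk)
  mul_mem' hf hg k hk := by
    rw [coeff_mul]
    refine S.sum_mem fun p hp => S.mul_mem (hf _ ?_) (hg _ ?_) <;>
      · rw [Finset.HasAntidiagonal.mem_antidiagonal] at hp
        omega

variable {S : Subring A} {N : ℕ}

lemma C_mem_truncSubring {a : A} (ha : a ∈ S) : C a ∈ truncSubring S N := fun k _ => by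
  rw [coeff_C]
  split_ifs
  exacts [ha, S.zero_mem]

lemma X_mem_truncSubring : X ∈ truncSubring S N := fun k _ => by
  rw [coeff_X]
  split_ifs
  exacts [S.one_mem, S.zero_mem]

end PowerSeries

open MvPolynomial

lemma MvPolynomial.IsWeightedHomogeneous.eval_exp_mul {σ : Type*} {w : σ → ℤ}
    {p : MvPolynomial σ ℂ} {m : ℤ} (hp : IsWeightedHomogeneous w p m) (c : ℂ)
    (x : σ → ℂ) :
    eval (fun i => Complex.exp (c * w i) * x i) p = Complex.exp (c * m) * eval x p := by
  rw [eval_eq, eval_eq, Finset.mul_sum]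
  refine Finset.sum_congr rfl fun d hd => ?_
  have hdm : Finsupp.weight w d = m := hp (mem_support_iff.mp hd)
  simp_rw [mul_pow, Finset.prod_mul_distrib, ← Complex.exp_nat_mul, ← Complex.exp_sum]
  rw [← hdm, Finsupp.weight_apply, Finsupp.sum, Int.cast_sum, Finset.mul_sum]
  rw [Finset.sum_congr rfl fun i _ => show (d i : ℂ) * (c * w i) = c * ↑(d i • w i) by
    rw [nsmul_eq_mul, Int.cast_mul, Int.cast_natCast]; ring]
  ring

lemma zEval_comp_singleZeroRingHom (R : Type) [CommRing R] [Algebra ℂ R] :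
    (zEval R).comp AddMonoidAlgebra.singleZeroRingHom =
      (PowerSeries.C (R := ModeRing R)).comp
        (AddMonoidAlgebra.singleZeroRingHom.comp (algebraMap ℂ R)) := by
  refine RingHom.ext fun c => ?_
  change AddMonoidAlgebra.liftNC _ _ (AddMonoidAlgebra.single 0 c) = _
  rw [AddMonoidAlgebra.liftNC_single]
  simp

lemma VEval_map_mem_truncSubring {n N : ℕ} {σ : Type} {w : σ → ℤ}
    (W : MvPolynomial (Fin n) ℂ[X]) {y : Fin n → EpsSeries (MvPolynomial σ ℂ)}
    (hy : ∀ i, y i ∈ PowerSeries.truncSubring (diagonalSubring w) N) :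
    VEval (MvPolynomial σ ℂ)
        (MvPolynomial.map (Polynomial.mapRingHom AddMonoidAlgebra.singleZeroRingHom) W) y ∈
      PowerSeries.truncSubring (diagonalSubring w) N := by
  rw [VEval, MvPolynomial.eval₂_map]
  refine MvPolynomial.eval₂_mem (fun d _ => ?_) hy
  rw [RingHom.comp_apply, Polynomial.coe_mapRingHom, Polynomial.coe_eval₂RingHom,
    Polynomial.eval₂_map, zEval_comp_singleZeroRingHom, Polynomial.eval₂_eq_sum_range]
  exact sum_mem fun k _ => mul_mem
    (PowerSeries.C_mem_truncSubring (single_mem_diagonalSubring (isWeightedHomogeneous_C w _)))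
    (pow_mem PowerSeries.X_mem_truncSubring k)

def ampWeight {n : ℕ} (mvec : Fin n → ℤ) : Option (Fin n) → ℤ := fun v => v.elim 0 mvec

lemma weight_ampWeight {n : ℕ} (mvec : Fin n → ℤ) (d : Option (Fin n) →₀ ℕ) :
    Finsupp.weight (ampWeight mvec) d = ∑ i : Fin n, (d (some i) : ℤ) * mvec i := by
  simp [Finsupp.weight_apply, Finsupp.sum_fintype, Fintype.sum_option, ampWeight]

namespace IsSecularFamily

variable {n : ℕ} {mvec : Fin n → ℤ}
  {V : Fin n → MvPolynomial (Fin n) (Polynomial (AddMonoidAlgebra ℂ ℤ))}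
  {Q : Fin n → EpsSeries (AmpRing n)}

lemma coeff_succ_mem_diagonalSubring (hQ : IsSecularFamily mvec V Q) {k : ℕ} {j : Fin n}
    (hF : PowerSeries.coeff k (VEval (AmpRing n) (V j) Q) ∈ diagonalSubring (ampWeight mvec)) :
    PowerSeries.coeff (k + 1) (Q j) ∈ diagonalSubring (ampWeight mvec) := by
  intro m
  have hode := congrArg (PowerSeries.coeff (k + 1)) (hQ.ode j m)
  simp only [map_add, PowerSeries.coeff_mk, PowerSeries.coeff_C_mul, Pc,
    PowerSeries.coeff_succ_X_mul] at hode
  refine isWeightedHomogeneous_of_pderiv_add_C_mul (i := none) rfl hode (hF m) fun hc d hd => ?_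
  obtain rfl : m = mvec j := by simpa [sub_eq_zero, Complex.I_ne_zero] using hc
  rw [← coeff_aeval_elim_zero _ hd, hQ.resonant_vanish j (k + 1) k.succ_pos,
    MvPolynomial.coeff_zero]

theorem mem_truncSubring (hQ : IsSecularFamily mvec V Q)
    (hV : ∀ j, ∃ W : MvPolynomial (Fin n) (Polynomial ℂ),
      V j = MvPolynomial.map (Polynomial.mapRingHom AddMonoidAlgebra.singleZeroRingHom) W)
    (N : ℕ) (j : Fin n) :
    Q j ∈ PowerSeries.truncSubring (diagonalSubring (ampWeight mvec)) N := by
  induction N generalizing j with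
  | zero => exact fun k hk => absurd hk k.not_lt_zero
  | succ N ih =>
    intro k hk
    rcases Nat.lt_succ_iff_lt_or_eq.mp hk with hk | rfl
    · exact ih j k hk
    cases k with
    | zero =>
      rw [hQ.coeff_zero j]
      exact single_mem_diagonalSubring (isWeightedHomogeneous_X ℂ _ _)
    | succ k =>
      obtain ⟨W, hW⟩ := hV j
      refine hQ.coeff_succ_mem_diagonalSubring ?_
      rw [hW]
      exact VEval_map_mem_truncSubring W ih k k.lt_succ_self

end IsSecularFamily

theorem autonomous_homogeneity_general {n : ℕ} (mvec : Fin n → ℤ)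
    (V : Fin n → MvPolynomial (Fin n) (Polynomial (AddMonoidAlgebra ℂ ℤ)))
    (hV : ∀ j, ∃ W : MvPolynomial (Fin n) (Polynomial ℂ),
      V j = MvPolynomial.map (Polynomial.mapRingHom AddMonoidAlgebra.singleZeroRingHom) W)
    (Q : Fin n → EpsSeries (AmpRing n))
    (hQ : IsSecularFamily mvec V Q) :
    ∀ (j : Fin n) (m : ℤ),
      (∀ (u : ℝ) (k : ℕ) (t : ℝ) (A : Fin n → ℂ),
        evalPt t A (PowerSeries.coeff (R := AmpRing n) k (Pc Q j m))
          = Complex.exp (Complex.I * (m : ℂ) * (u : ℂ))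
              * evalPt t (fun i => Complex.exp (-(Complex.I * (mvec i : ℂ) * (u : ℂ))) * A i)
                  (PowerSeries.coeff (R := AmpRing n) k (Pc Q j m)))
      ∧ (∀ (k : ℕ) (dexp : Option (Fin n) →₀ ℕ),
          MvPolynomial.coeff dexp (PowerSeries.coeff (R := AmpRing n) k (Pc Q j m)) ≠ 0 →
            ∑ i : Fin n, (dexp (some i) : ℤ) * mvec i = m) := by
  intro j m
  have hhom : ∀ k, IsWeightedHomogeneous (ampWeight mvec) (PowerSeries.coeff k (Pc Q j m)) m :=
    fun k => by simpa [Pc] using hQ.mem_truncSubring hV (k + 1) j k k.lt_succ_self m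
  refine ⟨fun u k t A => ?_, fun k d hd => weight_ampWeight mvec d ▸ hhom k hd⟩
  have hrot : (fun v : Option (Fin n) => Option.elim v (t : ℂ)
        fun i => Complex.exp (-(Complex.I * mvec i * u)) * A i) =
      fun v => Complex.exp (-(Complex.I * u) * ampWeight mvec v) * Option.elim v (t : ℂ) A := by
    funext v
    cases v with
    | none => simp [ampWeight]
    | some i => simp only [ampWeight, Option.elim]; ring_nf
  rw [evalPt, evalPt, hrot, (hhom k).eval_exp_mul, ← mul_assoc, ← Complex.exp_add,
    show Complex.I * m * u + -(Complex.I * u) * m = 0 by ring, Complex.exp_zero, one_mul]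

/-- homogeneity of the secular coefficients in the autonomous case:
if each `V_j` does not involve `z, z⁻¹` then for every `u ∈ ℝ`
`P_{j,m}(ε, t, A) = e^{imu} P_{j,m}(ε, t, (e^{-i m₁ u} A₁, …, e^{-i mₙ u} Aₙ))`
(at each `ε`-order, as polynomial functions of `(t,A) ∈ ℝ × ℂⁿ`); equivalently, every
monomial `ε^k t^l A₁^{r₁} ⋯ Aₙ^{rₙ}` occurring in `P_{j,m}` with nonzero coefficient
satisfies `r₁ m₁ + ⋯ + rₙ mₙ = m`. -/
theorem autonomous_homogeneity {n : ℕ} (hn : 0 < n) (mvec : Fin n → ℤ)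
    (V : Fin n → MvPolynomial (Fin n) (Polynomial (AddMonoidAlgebra ℂ ℤ)))
    (hV : ∀ j, ∃ W : MvPolynomial (Fin n) (Polynomial ℂ),
      V j = MvPolynomial.map (Polynomial.mapRingHom AddMonoidAlgebra.singleZeroRingHom) W)
    (Q : Fin n → EpsSeries (AmpRing n))
    (hQ : IsSecularFamily mvec V Q) :
    ∀ (j : Fin n) (m : ℤ),
      (∀ (u : ℝ) (k : ℕ) (t : ℝ) (A : Fin n → ℂ),
        evalPt t A (PowerSeries.coeff (R := AmpRing n) k (Pc Q j m))
          = Complex.exp (Complex.I * (m : ℂ) * (u : ℂ))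
              * evalPt t (fun i => Complex.exp (-(Complex.I * (mvec i : ℂ) * (u : ℂ))) * A i)
                  (PowerSeries.coeff (R := AmpRing n) k (Pc Q j m)))
      ∧ (∀ (k : ℕ) (dexp : Option (Fin n) →₀ ℕ),
          MvPolynomial.coeff dexp (PowerSeries.coeff (R := AmpRing n) k (Pc Q j m)) ≠ 0 →
            ∑ i : Fin n, (dexp (some i) : ℤ) * mvec i = m) :=
  autonomous_homogeneity_general mvec V hV Q hQ

end
end

section
/- Let {P_{j,m}(ε,t,A)} be a nilpotent secular-coefficient family with renormalized amplitudes 𝒜_j(ε,t,A) = P_{j,0}(ε,t,A). Then for all 1 ≤ j ≤ n and all m ∈ ℤ the functional relation P_{j,m}(ε, t, A) = P_{j,m}(ε, t − s, 𝒜(ε, s, A)) holds as an identity of formal power series in ε with coefficients in ℂ[t, s, A_1,…,A_n], where the right-hand side means: substitute t − s for the t-variable and 𝒜_i(ε,s,A) for the A_i-variable (each i) in P_{j,m}. -/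
noncomputable section

open Polynomial

/-- `g(t,A) = Σ_{k=1}^{n} A_k t^{k-1}/(k-1)!` as an element of `ℂ[t,A]` (here `0`-indexed:
`g = Σ_{k : Fin n} A_k t^k / k!`). -/
def gMv (n : ℕ) : AmpRing n :=
  ∑ k : Fin n, MvPolynomial.C ((1 : ℂ) / ((k : ℕ).factorial : ℂ))
    * MvPolynomial.X (some k) * MvPolynomial.X (none : Option (Fin n)) ^ (k : ℕ)

/-- The `(j+1)`-st secular coefficient, with the convention `P_{n+1,m} := 0`. -/
def PcNext {n : ℕ} (Q : Fin n → EpsSeries (AmpRing n)) (j : Fin n) (m : ℤ) :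
    PowerSeries (AmpRing n) :=
  if h : (j : ℕ) + 1 < n then Pc Q ⟨(j : ℕ) + 1, h⟩ m else 0

/-- A nilpotent secular-coefficient family for `dy/dt = Λ y + ε V(ε,e^{±it},y)`, `Λ` the upper
Jordan nilpotent block:
(a) at each `ε`-order only finitely many modes are nonzero (built into `ModeRing`);
(b) the `ε⁰`-coefficient of `P_{j,m}` is `δ_{m,0} d^{j-1}g/dt^{j-1}`;
(c) for `k ≥ 1` the `ε^k`-coefficient of the resonant `P_{j,0}` vanishes at `t = 0`;
(d) order by order in `ε` and mode by mode in `e^{imt}`: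
`∂_t P_{j,m} + i m P_{j,m} = P_{j+1,m} + [ε V_j(ε, e^{±it}, Σ_l P_{·,l} e^{ilt})]_{e^{imt}}`. -/
structure IsNilpotentSecularFamily {n : ℕ}
    (V : Fin n → MvPolynomial (Fin n) (Polynomial (AddMonoidAlgebra ℂ ℤ)))
    (Q : Fin n → EpsSeries (AmpRing n)) : Prop where
  coeff_zero : ∀ j : Fin n, PowerSeries.coeff (R := ModeRing (AmpRing n)) 0 (Q j)
      = AddMonoidAlgebra.single 0 ((fun p => MvPolynomial.pderiv none p)^[(j : ℕ)] (gMv n))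
  resonant_vanish : ∀ (j : Fin n) (k : ℕ), 1 ≤ k →
    MvPolynomial.aeval
      (fun v : Option (Fin n) => Option.elim v (0 : AmpRing n) (fun i => MvPolynomial.X (some i)))
      ((PowerSeries.coeff (R := ModeRing (AmpRing n)) k (Q j)).coeff 0) = 0
  ode : ∀ (j : Fin n) (m : ℤ),
    (PowerSeries.mk fun k =>
        MvPolynomial.pderiv none ((PowerSeries.coeff (R := ModeRing (AmpRing n)) k (Q j)).coeff m))
      + PowerSeries.C (MvPolynomial.C (Complex.I * (m : ℂ))) * Pc Q j m
      = PcNext Q j m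
        + PowerSeries.mk fun k =>
            (PowerSeries.coeff (R := ModeRing (AmpRing n)) k
              (PowerSeries.X * VEval (AmpRing n) (V j) Q)).coeff m

/-- The renormalized amplitude `𝒜_i(ε,s,A) = P_{i,0}(ε,s,A)`, as an element of
`ℂ[t,s,A][[ε]]` (the `t`-variable of `P` renamed to `s`). -/
def renAmpS0 {n : ℕ} (Q : Fin n → EpsSeries (AmpRing n)) (i : Fin n) :
    PowerSeries (AmpRing2 n) :=
  PowerSeries.map renameTS (Pc Q i 0)

/-- The substitution `t ↦ t - s`, `A_i ↦ 𝒜_i(ε,s,A)`, as a ring map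
`ℂ[t,A] → ℂ[t,s,A][[ε]]`. -/
def substTA0 {n : ℕ} (Q : Fin n → EpsSeries (AmpRing n)) :
    AmpRing n →+* PowerSeries (AmpRing2 n) :=
  MvPolynomial.eval₂Hom ((PowerSeries.C (R := AmpRing2 n)).comp MvPolynomial.C)
    (fun v : Option (Fin n) => Option.elim v
      (PowerSeries.C (MvPolynomial.X none - MvPolynomial.X (some none)))
      (fun i => renAmpS0 Q i))

/-!
Both sides are images of the family `P` under substitutions `φ : ℂ[t,A] → ℂ[t,s,A][[ε]]` of the
coefficient variables: the inclusion, and `t ↦ t - s`, `A ↦ 𝒜(ε,s,A)`. Each of them fixes `ε`,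
`e^{imt}` and the constants and commutes with `∂ₜ`, so both image families solve the same
mode-by-mode system `∂ₜP_{j,m} + imP_{j,m} = P_{j+1,m} + [εV_j(P)]_m`. Its polynomial solutions are
determined by their resonant modes at one time: order by order in `ε` and downwards in `j`, a mode
solves `∂ₜu + imu = f` with `f` known, which fixes `u` for `m ≠ 0` and fixes it up to a
`t`-independent term for `m = 0`. At `t = s` both resonant families equal `𝒜(ε,s,A)`: trivially for
the inclusion, and for the other substitution because `t - s` vanishes there and, by (b) and (c),
`P_{j,0} = A_j` at `t = 0`.
-/

namespace PowerSeries

section CoeffSubst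

variable {R R' R'' : Type} [CommRing R] [CommRing R'] [CommRing R'']

lemma coeff_eval₂_X (φ : R →+* PowerSeries R') (r : R[X]) (K : ℕ) :
    coeff K (r.eval₂ φ X) = ∑ k ∈ Finset.range (K + 1), coeff (K - k) (φ (r.coeff k)) := by
  induction r using Polynomial.induction_on' with
  | add p q hp hq => simp only [Polynomial.eval₂_add, map_add, hp, hq, Polynomial.coeff_add,
      Finset.sum_add_distrib]
  | monomial k a =>
    simp only [Polynomial.eval₂_monomial, coeff_mul_X_pow', Polynomial.coeff_monomial,
      apply_ite φ, apply_ite (coeff _), map_zero, Finset.sum_ite_eq, Finset.mem_range,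
      Nat.lt_succ_iff]

lemma coeff_substSeries_eq_coeff_eval₂ (φ : R →+* PowerSeries R') {p : PowerSeries R}
    {r : R[X]} {K : ℕ} (h : ∀ k ≤ K, r.coeff k = coeff k p) :
    coeff K (substSeries φ p) = coeff K (r.eval₂ φ X) := by
  rw [coeff_eval₂_X, substSeries, coeff_mk]
  refine Finset.sum_congr rfl fun k hk => ?_
  rw [h k (Nat.lt_succ_iff.mp (Finset.mem_range.mp hk))]

lemma substSeries_coe (φ : R →+* PowerSeries R') (r : R[X]) :
    substSeries φ (r : PowerSeries R) = r.eval₂ φ X :=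
  ext fun _ => coeff_substSeries_eq_coeff_eval₂ φ fun k _ => (Polynomial.coeff_coe r k).symm

/-- Multiplicative because each coefficient of `substSeries φ p` agrees with that of
`eval₂ φ X` on a truncation of `p`. -/
def coeffSubst (φ : R →+* PowerSeries R') : PowerSeries R →+* PowerSeries R' where
  toFun := substSeries φ
  map_one' := by rw [← Polynomial.coe_one, substSeries_coe, Polynomial.eval₂_one]
  map_zero' := by rw [← Polynomial.coe_zero, substSeries_coe, Polynomial.eval₂_zero]
  map_add' p q := ext fun K => by simp only [substSeries, coeff_mk, map_add, Finset.sum_add_distrib]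
  map_mul' p q := ext fun K => by
    have trunc_eq : ∀ f : PowerSeries R, ∀ k ≤ K, (trunc (K + 1) f).coeff k = coeff k f :=
      fun f k hk => by rw [coeff_trunc, if_pos (Nat.lt_succ_of_le hk)]
    rw [coeff_substSeries_eq_coeff_eval₂ φ (r := trunc (K + 1) p * trunc (K + 1) q) fun k hk => by
        rw [← Polynomial.coeff_coe, Polynomial.coe_mul, coeff_mul, coeff_mul]
        refine Finset.sum_congr rfl fun x hx => ?_
        have hx₁ := Finset.HasAntidiagonal.antidiagonal.fst_le hx
        have hx₂ := Finset.HasAntidiagonal.antidiagonal.snd_le hx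
        rw [Polynomial.coeff_coe, Polynomial.coeff_coe, trunc_eq p _ (by omega),
          trunc_eq q _ (by omega)],
      Polynomial.eval₂_mul, coeff_mul, coeff_mul]
    refine Finset.sum_congr rfl fun x hx => ?_
    rw [coeff_substSeries_eq_coeff_eval₂ φ fun k hk => trunc_eq p k
        (hk.trans (Finset.HasAntidiagonal.antidiagonal.fst_le hx)),
      coeff_substSeries_eq_coeff_eval₂ φ fun k hk => trunc_eq q k
        (hk.trans (Finset.HasAntidiagonal.antidiagonal.snd_le hx))]

lemma coeffSubst_apply (φ : R →+* PowerSeries R') (p : PowerSeries R) :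
    coeffSubst φ p = substSeries φ p := rfl

lemma coeff_coeffSubst (φ : R →+* PowerSeries R') (p : PowerSeries R) (K : ℕ) :
    coeff K (coeffSubst φ p) = ∑ k ∈ Finset.range (K + 1), coeff (K - k) (φ (coeff k p)) :=
  coeff_mk _ (fun K => ∑ k ∈ Finset.range (K + 1), coeff (K - k) (φ (coeff k p)))

lemma coeffSubst_C (φ : R →+* PowerSeries R') (a : R) : coeffSubst φ (C a) = φ a := by
  rw [coeffSubst_apply, ← Polynomial.coe_C, substSeries_coe, Polynomial.eval₂_C]

lemma coeffSubst_X (φ : R →+* PowerSeries R') : coeffSubst φ X = X := by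
  rw [coeffSubst_apply, ← Polynomial.coe_X, substSeries_coe, Polynomial.eval₂_X]

lemma coeffSubst_C_comp (f : R →+* R') : coeffSubst ((C (R := R')).comp f) = map f :=
  RingHom.ext fun p => ext fun K => by
    rw [coeff_coeffSubst, Finset.sum_eq_single K (fun k hk hkK => by
      rw [RingHom.comp_apply, coeff_C, if_neg (by have := Finset.mem_range.mp hk; omega)])
      (by simp)]
    simp

lemma coeffSubst_map (φ : R' →+* PowerSeries R'') (f : R →+* R') (p : PowerSeries R) :
    coeffSubst φ (map f p) = coeffSubst (φ.comp f) p :=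
  ext fun K => by simp only [coeff_coeffSubst, coeff_map, RingHom.comp_apply]

lemma map_coeffSubst (ψ : R' →+* R'') (φ : R →+* PowerSeries R') (p : PowerSeries R) :
    map ψ (coeffSubst φ p) = coeffSubst ((map ψ).comp φ) p :=
  ext fun K => by simp only [coeff_map, coeff_coeffSubst, map_sum, RingHom.comp_apply]

end CoeffSubst

end PowerSeries

namespace EpsSeries

section Modes

variable {R R' : Type} [CommRing R] [CommRing R']

lemma val_zUnit_zpow (m : ℤ) :
    ((zUnit R ^ m : (EpsSeries R)ˣ) : EpsSeries R)
      = PowerSeries.C (AddMonoidAlgebra.single m 1) := by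
  induction m using Int.induction_on with
  | zero => rw [zpow_zero, Units.val_one, ← AddMonoidAlgebra.one_def, map_one]
  | succ k ih =>
    rw [zpow_add_one, Units.val_mul, ih, show (zUnit R : EpsSeries R) =
      PowerSeries.C (AddMonoidAlgebra.single 1 1) from rfl, ← map_mul,
      AddMonoidAlgebra.single_mul_single, mul_one]
  | pred k ih =>
    rw [zpow_sub_one, Units.val_mul, ih, show (((zUnit R)⁻¹ : (EpsSeries R)ˣ) : EpsSeries R) =
      PowerSeries.C (AddMonoidAlgebra.single (-1) 1) from rfl, ← map_mul,
      AddMonoidAlgebra.single_mul_single, mul_one, sub_eq_add_neg]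

lemma singleZeroRingHom_eq_single (r : R) :
    (AddMonoidAlgebra.singleZeroRingHom r : ModeRing R) = AddMonoidAlgebra.single 0 r := rfl

lemma zEval_single [Algebra ℂ R] (m : ℤ) (c : ℂ) :
    zEval R (AddMonoidAlgebra.single m c)
      = PowerSeries.C (AddMonoidAlgebra.single m (algebraMap ℂ R c)) := by
  simp only [zEval, AddMonoidAlgebra.liftNCRingHom_single, RingHom.coe_comp, Function.comp_apply,
    MonoidHom.coe_comp, Units.coeHom_apply, zpowersHom_apply, toAdd_ofAdd, val_zUnit_zpow,
    singleZeroRingHom_eq_single, ← map_mul, AddMonoidAlgebra.single_mul_single,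
    zero_add, mul_one]

def mode (u : EpsSeries R) (m : ℤ) : PowerSeries R :=
  PowerSeries.mk fun k => (PowerSeries.coeff k u).coeff m

@[simp]
lemma coeff_mode (u : EpsSeries R) (m : ℤ) (k : ℕ) :
    PowerSeries.coeff k (mode u m) = (PowerSeries.coeff k u).coeff m :=
  PowerSeries.coeff_mk _ _

/-- A substitution `φ` of the amplitude variables, extended to Fourier sums by
`e^{imt} ↦ e^{imt}`. -/
def modeLift (φ : R →+* PowerSeries R') : ModeRing R →+* EpsSeries R' :=
  AddMonoidAlgebra.liftNCRingHom ((PowerSeries.map AddMonoidAlgebra.singleZeroRingHom).comp φ)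
    ((Units.coeHom _).comp (zpowersHom _ (zUnit R'))) fun _ _ => Commute.all _ _

lemma modeLift_single (φ : R →+* PowerSeries R') (m : ℤ) (a : R) :
    modeLift φ (AddMonoidAlgebra.single m a)
      = PowerSeries.map AddMonoidAlgebra.singleZeroRingHom (φ a)
        * PowerSeries.C (AddMonoidAlgebra.single m 1) := by
  simp only [modeLift, AddMonoidAlgebra.liftNCRingHom_single, RingHom.coe_comp, Function.comp_apply,
    MonoidHom.coe_comp, Units.coeHom_apply, zpowersHom_apply, toAdd_ofAdd, val_zUnit_zpow]

lemma coeff_modeLift (φ : R →+* PowerSeries R') (f : ModeRing R) (d : ℕ) (m : ℤ) :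
    (PowerSeries.coeff d (modeLift φ f)).coeff m = PowerSeries.coeff d (φ (f.coeff m)) := by
  induction f using AddMonoidAlgebra.induction_linear with
  | zero => simp
  | add f g hf hg => simp only [map_add, AddMonoidAlgebra.coeff_add, Finsupp.add_apply, hf, hg]
  | single m' a =>
    rw [modeLift_single, PowerSeries.coeff_mul_C, PowerSeries.coeff_map,
      singleZeroRingHom_eq_single, AddMonoidAlgebra.single_mul_single, zero_add, mul_one,
      AddMonoidAlgebra.coeff_single, AddMonoidAlgebra.coeff_single, Finsupp.single_apply,
      Finsupp.single_apply]
    split_ifs <;> simp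

def ampSubst (φ : R →+* PowerSeries R') : EpsSeries R →+* EpsSeries R' :=
  PowerSeries.coeffSubst (modeLift φ)

lemma mode_ampSubst (φ : R →+* PowerSeries R') (u : EpsSeries R) (m : ℤ) :
    mode (ampSubst φ u) m = PowerSeries.coeffSubst φ (mode u m) :=
  PowerSeries.ext fun K => by
    simp only [coeff_mode, ampSubst, PowerSeries.coeff_coeffSubst, AddMonoidAlgebra.coeff_sum,
      Finset.sum_apply', coeff_modeLift]

lemma ampSubst_X (φ : R →+* PowerSeries R') : ampSubst φ PowerSeries.X = PowerSeries.X :=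
  PowerSeries.coeffSubst_X _

lemma ampSubst_zEval [Algebra ℂ R] [Algebra ℂ R'] (φ : R →+* PowerSeries R')
    (hφ : ∀ c : ℂ, φ (algebraMap ℂ R c) = PowerSeries.C (algebraMap ℂ R' c))
    (w : AddMonoidAlgebra ℂ ℤ) :
    ampSubst φ (zEval R w) = zEval R' w := by
  induction w using AddMonoidAlgebra.induction_linear with
  | zero => simp
  | add f g hf hg => rw [map_add, map_add, hf, hg, map_add]
  | single m c =>
    rw [zEval_single, zEval_single, ampSubst, PowerSeries.coeffSubst_C, modeLift_single, hφ,
      PowerSeries.map_C, singleZeroRingHom_eq_single, ← map_mul,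
      AddMonoidAlgebra.single_mul_single, zero_add, mul_one]

lemma map_VEval [Algebra ℂ R] [Algebra ℂ R'] {n : ℕ} (F : EpsSeries R →+* EpsSeries R')
    (hz : ∀ w, F (zEval R w) = zEval R' w) (hX : F PowerSeries.X = PowerSeries.X)
    (V : MvPolynomial (Fin n) (Polynomial (AddMonoidAlgebra ℂ ℤ))) (y : Fin n → EpsSeries R) :
    F (VEval R V y) = VEval R' V (fun i => F (y i)) := by
  have hcoeff : F.comp (Polynomial.eval₂RingHom (zEval R) PowerSeries.X)
      = Polynomial.eval₂RingHom (zEval R') PowerSeries.X :=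
    Polynomial.ringHom_ext (fun a => by simpa using hz a) (by simpa using hX)
  rw [VEval, MvPolynomial.eval₂_comp_left F, hcoeff, VEval]
  rfl

end Modes

end EpsSeries

lemma Polynomial.eq_zero_of_derivative_add_C_mul_eq_zero {R : Type} [CommRing R]
    [NoZeroDivisors R] {c : R} (hc : c ≠ 0) {q : R[X]} (h : derivative q + C c * q = 0) :
    q = 0 := by
  have hlead := congrArg (coeff · q.natDegree) h
  simp only [coeff_add, coeff_derivative, coeff_C_mul, coeff_zero,
    coeff_eq_zero_of_natDegree_lt (Nat.lt_succ_self q.natDegree), zero_mul, zero_add] at hlead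
  exact leadingCoeff_eq_zero.mp ((mul_eq_zero.mp hlead).resolve_left hc)

namespace MvPolynomial

section OptionNone

variable {R σ : Type} [CommRing R]

/-- The substitution `t ↦ a` in `R[t, x]`, where `t` is the variable `none`. -/
def substNone (a : MvPolynomial (Option σ) R) :
    MvPolynomial (Option σ) R →+* MvPolynomial (Option σ) R :=
  (aeval fun v : Option σ => v.elim a fun i => X (some i)).toRingHom

lemma optionEquivLeft_pderiv_none (p : MvPolynomial (Option σ) R) :
    optionEquivLeft R σ (pderiv none p) = derivative (optionEquivLeft R σ p) := by
  induction p using MvPolynomial.induction_on with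
  | C c => simp
  | add p q hp hq => simp only [map_add, hp, hq]
  | mul_X p v ih => cases v <;> simp [Polynomial.derivative_mul, ih, mul_comm]

lemma substNone_rename_some (a : MvPolynomial (Option σ) R) (b : MvPolynomial σ R) :
    substNone a (rename some b) = rename some b := by
  simp only [substNone, AlgHom.toRingHom_eq_coe, RingHom.coe_coe, aeval_rename]
  rw [rename_eq_aeval]
  rfl

lemma substNone_eq_self_of_pderiv_none_eq_zero [IsDomain R] [CharZero R]
    {p : MvPolynomial (Option σ) R} (h : pderiv none p = 0) (a : MvPolynomial (Option σ) R) :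
    substNone a p = p := by
  have hC := Polynomial.eq_C_of_derivative_eq_zero
    (by rw [← optionEquivLeft_pderiv_none, h, map_zero] : derivative (optionEquivLeft R σ p) = 0)
  have hp : p = rename some ((optionEquivLeft R σ p).coeff 0) := by
    conv_lhs => rw [← (optionEquivLeft R σ).symm_apply_apply p, hC]
    simp [optionEquivLeft_symm_apply]
  rw [hp, substNone_rename_some]

lemma substNone_zero_apply (p : MvPolynomial (Option σ) R) :
    substNone 0 p = rename some ((optionEquivLeft R σ p).coeff 0) := by
  have h : substNone (0 : MvPolynomial (Option σ) R) = (rename some).toRingHom.comp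
      (Polynomial.constantCoeff.comp (optionEquivLeft R σ).toRingHom) :=
    ringHom_ext (fun c => by simp [substNone]) fun v => by cases v <;> simp [substNone]
  rw [h]
  rfl

lemma eq_zero_of_pderiv_none_add_C_mul_eq_zero [IsDomain R] {c : R} (hc : c ≠ 0)
    {p : MvPolynomial (Option σ) R} (h : pderiv none p + C c * p = 0) : p = 0 := by
  refine (optionEquivLeft R σ).injective ?_
  rw [map_zero]
  refine Polynomial.eq_zero_of_derivative_add_C_mul_eq_zero (c := C c) (by simpa using hc) ?_
  rw [← optionEquivLeft_pderiv_none, ← optionEquivLeft_C, ← map_mul, ← map_add, h, map_zero]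

lemma eq_of_pderiv_none_add_C_mul_eq [IsDomain R] [CharZero R] {c : R}
    {p q : MvPolynomial (Option σ) R} (h : pderiv none p + C c * p = pderiv none q + C c * q)
    (a : MvPolynomial (Option σ) R) (h₀ : c = 0 → substNone a p = substNone a q) : p = q := by
  have hd : pderiv none (p - q) + C c * (p - q) = 0 := by
    rw [map_sub, mul_sub]; linear_combination h
  rw [← sub_eq_zero]
  rcases eq_or_ne c 0 with rfl | hc
  · rw [C_0, zero_mul, add_zero] at hd
    rw [← substNone_eq_self_of_pderiv_none_eq_zero hd a, map_sub, h₀ rfl, sub_self]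
  · exact eq_zero_of_pderiv_none_add_C_mul_eq_zero hc hd

end OptionNone

end MvPolynomial

namespace PowerSeries

section CoeffPderiv

open MvPolynomial in
def coeffPderiv {R σ : Type} [CommRing R] (i : σ) (u : PowerSeries (MvPolynomial σ R)) :
    PowerSeries (MvPolynomial σ R) :=
  mk fun K => pderiv i (coeff K u)

variable {R σ τ : Type} [CommRing R]

@[simp]
lemma coeff_coeffPderiv (i : σ) (u : PowerSeries (MvPolynomial σ R)) (K : ℕ) :
    coeff K (coeffPderiv i u) = MvPolynomial.pderiv i (coeff K u) :=
  coeff_mk _ _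

lemma coeffPderiv_C (i : σ) (p : MvPolynomial σ R) :
    coeffPderiv i (C p) = C (MvPolynomial.pderiv i p) :=
  ext fun K => by simp only [coeff_coeffPderiv, coeff_C]; split_ifs <;> simp

lemma coeffPderiv_add (i : σ) (u v : PowerSeries (MvPolynomial σ R)) :
    coeffPderiv i (u + v) = coeffPderiv i u + coeffPderiv i v :=
  ext fun K => by simp

lemma coeffPderiv_mul (i : σ) (u v : PowerSeries (MvPolynomial σ R)) :
    coeffPderiv i (u * v) = coeffPderiv i u * v + u * coeffPderiv i v :=
  ext fun K => by
    simp only [coeff_coeffPderiv, coeff_mul, map_sum, MvPolynomial.pderiv_mul, map_add,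
      Finset.sum_add_distrib]

/-- Both sides are derivations along `φ`. -/
lemma coeffPderiv_apply_of_forall_X (φ : MvPolynomial σ R →+* PowerSeries (MvPolynomial τ R))
    (i : σ) (i' : τ) (hC : ∀ c, φ (MvPolynomial.C c) = C (MvPolynomial.C c))
    (hX : ∀ v, coeffPderiv i' (φ (MvPolynomial.X v)) = φ (MvPolynomial.pderiv i (MvPolynomial.X v)))
    (p : MvPolynomial σ R) :
    coeffPderiv i' (φ p) = φ (MvPolynomial.pderiv i p) := by
  induction p using MvPolynomial.induction_on with
  | C c => rw [hC, coeffPderiv_C, MvPolynomial.pderiv_C, MvPolynomial.pderiv_C, map_zero, map_zero]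
  | add p q hp hq => rw [map_add, coeffPderiv_add, hp, hq, map_add, map_add]
  | mul_X p v ih =>
    rw [map_mul, coeffPderiv_mul, ih, hX, MvPolynomial.pderiv_mul, map_add, map_mul, map_mul]

lemma coeffSubst_coeffPderiv (φ : MvPolynomial σ R →+* PowerSeries (MvPolynomial τ R))
    {i : σ} {i' : τ} (hφ : ∀ p, coeffPderiv i' (φ p) = φ (MvPolynomial.pderiv i p))
    (u : PowerSeries (MvPolynomial σ R)) :
    coeffSubst φ (coeffPderiv i u) = coeffPderiv i' (coeffSubst φ u) :=
  ext fun K => by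
    simp only [coeff_coeffSubst, coeff_coeffPderiv, map_sum, ← hφ]

end CoeffPderiv

end PowerSeries

section VEvalTruncation

variable {R : Type} [CommRing R] [Algebra ℂ R] {n : ℕ}

lemma coeff_VEval_eq_of_coeff_eq (V : MvPolynomial (Fin n) (Polynomial (AddMonoidAlgebra ℂ ℤ)))
    {y y' : Fin n → EpsSeries R} {d : ℕ}
    (h : ∀ i, ∀ k ≤ d, PowerSeries.coeff k (y i) = PowerSeries.coeff k (y' i)) :
    ∀ k ≤ d, PowerSeries.coeff k (VEval R V y) = PowerSeries.coeff k (VEval R V y') := by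
  induction V using MvPolynomial.induction_on with
  | C a => simp [VEval]
  | add p q hp hq =>
    intro k hk
    simp only [VEval, MvPolynomial.eval₂_add, map_add] at hp hq ⊢
    rw [hp k hk, hq k hk]
  | mul_X p i hp =>
    intro k hk
    simp only [VEval, MvPolynomial.eval₂_mul, MvPolynomial.eval₂_X, PowerSeries.coeff_mul] at hp ⊢
    refine Finset.sum_congr rfl fun x hx => ?_
    rw [hp x.1 ((Finset.HasAntidiagonal.antidiagonal.fst_le hx).trans hk),
      h i x.2 ((Finset.HasAntidiagonal.antidiagonal.snd_le hx).trans hk)]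

lemma coeff_X_mul_VEval_eq_of_coeff_eq
    (V : MvPolynomial (Fin n) (Polynomial (AddMonoidAlgebra ℂ ℤ)))
    {y y' : Fin n → EpsSeries R} {K : ℕ}
    (h : ∀ i, ∀ k < K, PowerSeries.coeff k (y i) = PowerSeries.coeff k (y' i)) :
    PowerSeries.coeff K (PowerSeries.X * VEval R V y)
      = PowerSeries.coeff K (PowerSeries.X * VEval R V y') := by
  rcases K with _ | K
  · simp
  · rw [PowerSeries.coeff_succ_X_mul, PowerSeries.coeff_succ_X_mul]
    exact coeff_VEval_eq_of_coeff_eq V (fun i k hk => h i k (Nat.lt_succ_of_le hk)) K le_rfl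

end VEvalTruncation

open EpsSeries in
/-- `Y` solves `dy/dt = Λy + εV(ε, e^{±it}, y)` mode by mode, `t` being the variable `none`. -/
def IsNilpotentSolution {n : ℕ} {σ : Type}
    (V : Fin n → MvPolynomial (Fin n) (Polynomial (AddMonoidAlgebra ℂ ℤ)))
    (Y : Fin n → EpsSeries (MvPolynomial (Option σ) ℂ)) : Prop :=
  ∀ (j : Fin n) (m : ℤ),
    (mode (Y j) m).coeffPderiv none
        + PowerSeries.C (MvPolynomial.C (Complex.I * m)) * mode (Y j) m
      = (if h : (j : ℕ) + 1 < n then mode (Y ⟨j + 1, h⟩) m else 0)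
        + mode (PowerSeries.X * VEval _ (V j) Y) m

lemma Pc_eq_mode {n : ℕ} (Q : Fin n → EpsSeries (AmpRing n)) (j : Fin n) (m : ℤ) :
    Pc Q j m = EpsSeries.mode (Q j) m := rfl

lemma IsNilpotentSecularFamily.isNilpotentSolution {n : ℕ}
    {V : Fin n → MvPolynomial (Fin n) (Polynomial (AddMonoidAlgebra ℂ ℤ))}
    {Q : Fin n → EpsSeries (AmpRing n)} (hQ : IsNilpotentSecularFamily V Q) :
    IsNilpotentSolution V Q := by
  intro j m
  have h := hQ.ode j m
  rwa [show (PowerSeries.mk fun k => MvPolynomial.pderiv none ((PowerSeries.coeff k (Q j)).coeff m))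
      = (EpsSeries.mode (Q j) m).coeffPderiv none from PowerSeries.ext fun k => by simp,
    PcNext] at h

namespace IsNilpotentSolution

open EpsSeries

variable {n : ℕ} {σ τ : Type} {V : Fin n → MvPolynomial (Fin n) (Polynomial (AddMonoidAlgebra ℂ ℤ))}

lemma coeff {Y : Fin n → EpsSeries (MvPolynomial (Option σ) ℂ)} (hY : IsNilpotentSolution V Y)
    (j : Fin n) (m : ℤ) (K : ℕ) :
    MvPolynomial.pderiv none ((PowerSeries.coeff K (Y j)).coeff m)
        + MvPolynomial.C (Complex.I * m) * (PowerSeries.coeff K (Y j)).coeff m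
      = (if h : (j : ℕ) + 1 < n then (PowerSeries.coeff K (Y ⟨j + 1, h⟩)).coeff m else 0)
        + (PowerSeries.coeff K (PowerSeries.X * VEval _ (V j) Y)).coeff m := by
  have h := congrArg (PowerSeries.coeff K) (hY j m)
  simp only [map_add, PowerSeries.coeff_C_mul, PowerSeries.coeff_coeffPderiv, coeff_mode,
    apply_dite (PowerSeries.coeff K), map_zero] at h
  exact h

lemma ampSubst {Y : Fin n → EpsSeries (MvPolynomial (Option σ) ℂ)} (hY : IsNilpotentSolution V Y)
    (φ : MvPolynomial (Option σ) ℂ →+* PowerSeries (MvPolynomial (Option τ) ℂ))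
    (hC : ∀ c, φ (MvPolynomial.C c) = PowerSeries.C (MvPolynomial.C c))
    (hD : ∀ p, (φ p).coeffPderiv none = φ (MvPolynomial.pderiv none p)) :
    IsNilpotentSolution V fun i => EpsSeries.ampSubst φ (Y i) := by
  intro j m
  have hz : ∀ w, EpsSeries.ampSubst φ (zEval _ w) = zEval _ w :=
    ampSubst_zEval φ fun c => by rw [MvPolynomial.algebraMap_eq, MvPolynomial.algebraMap_eq, hC]
  have h := congrArg (PowerSeries.coeffSubst φ) (hY j m)
  rw [map_add, map_add, map_mul (PowerSeries.coeffSubst φ),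
    PowerSeries.coeffSubst_coeffPderiv φ hD, PowerSeries.coeffSubst_C, hC,
    apply_dite (PowerSeries.coeffSubst φ), map_zero] at h
  simp only [← mode_ampSubst] at h
  rwa [map_mul (EpsSeries.ampSubst φ), ampSubst_X, map_VEval _ hz (ampSubst_X φ)] at h

theorem eq_of_map_substNone_mode_zero {Y Y' : Fin n → EpsSeries (MvPolynomial (Option σ) ℂ)}
    (hY : IsNilpotentSolution V Y) (hY' : IsNilpotentSolution V Y')
    (a : MvPolynomial (Option σ) ℂ)
    (h₀ : ∀ j, PowerSeries.map (MvPolynomial.substNone a) (mode (Y j) 0)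
      = PowerSeries.map (MvPolynomial.substNone a) (mode (Y' j) 0)) :
    Y = Y' := by
  suffices h : ∀ K j m, (PowerSeries.coeff K (Y j)).coeff m = (PowerSeries.coeff K (Y' j)).coeff m
    from funext fun j => PowerSeries.ext fun K =>
      AddMonoidAlgebra.ext <| Finsupp.ext fun m => h K j m
  intro K
  induction K using Nat.strong_induction_on with | _ K ihK =>
  have hV : ∀ j, PowerSeries.coeff K (PowerSeries.X * VEval _ (V j) Y)
      = PowerSeries.coeff K (PowerSeries.X * VEval _ (V j) Y') := fun j =>
    coeff_X_mul_VEval_eq_of_coeff_eq (V j) fun i k hk =>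
      AddMonoidAlgebra.ext <| Finsupp.ext fun m => ihK k hk i m
  intro j
  induction j using WellFoundedGT.induction with | _ j ihj =>
  intro m
  have hnext : (if h : (j : ℕ) + 1 < n then (PowerSeries.coeff K (Y ⟨j + 1, h⟩)).coeff m else 0)
      = (if h : (j : ℕ) + 1 < n then (PowerSeries.coeff K (Y' ⟨j + 1, h⟩)).coeff m else 0) := by
    split_ifs with h
    · exact ihj _ (Fin.lt_def.mpr (Nat.lt_succ_self _)) m
    · rfl
  refine MvPolynomial.eq_of_pderiv_none_add_C_mul_eq (c := Complex.I * m) ?_ a fun hm => ?_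
  · rw [hY.coeff, hY'.coeff, hnext, hV]
  · obtain rfl : m = 0 := by simpa using hm
    simpa using congrArg (PowerSeries.coeff K) (h₀ j)

end IsNilpotentSolution

section Amplitudes

open MvPolynomial (substNone pderiv optionEquivLeft)

variable {n : ℕ}

lemma substNone_zero_iterate_pderiv_gMv (j : Fin n) :
    substNone 0 ((fun p => pderiv none p)^[(j : ℕ)] (gMv n)) = MvPolynomial.X (some j) := by
  have hsemi : Function.Semiconj (optionEquivLeft ℂ (Fin n)) (fun p => pderiv none p)
      derivative := MvPolynomial.optionEquivLeft_pderiv_none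
  have hcoeff : (optionEquivLeft ℂ (Fin n) (gMv n)).coeff j
      = MvPolynomial.C (1 / ((j : ℕ).factorial : ℂ)) * MvPolynomial.X j := by
    have hterm : ∀ (k : Fin n) (c : ℂ), optionEquivLeft ℂ (Fin n)
        (MvPolynomial.C c * MvPolynomial.X (some k) * MvPolynomial.X none ^ (k : ℕ))
        = C (MvPolynomial.C c * MvPolynomial.X k) * X ^ (k : ℕ) := by simp
    simp only [gMv, map_sum, hterm, Polynomial.finsetSum_coeff, Polynomial.coeff_C_mul_X_pow,
      Fin.val_inj, Finset.sum_ite_eq, Finset.mem_univ, if_true]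
  rw [MvPolynomial.substNone_zero_apply, (hsemi.iterate_right j).eq, coeff_iterate_derivative,
    zero_add, Nat.descFactorial_self, hcoeff, nsmul_eq_mul, ← mul_assoc,
    ← map_natCast MvPolynomial.C, ← map_mul,
    mul_one_div_cancel (Nat.cast_ne_zero.mpr (Nat.factorial_ne_zero _)), map_one, one_mul,
    MvPolynomial.rename_X]

lemma IsNilpotentSecularFamily.map_substNone_zero_Pc_zero
    {V : Fin n → MvPolynomial (Fin n) (Polynomial (AddMonoidAlgebra ℂ ℤ))}
    {Q : Fin n → EpsSeries (AmpRing n)} (hQ : IsNilpotentSecularFamily V Q) (j : Fin n) :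
    PowerSeries.map (substNone 0) (Pc Q j 0) = PowerSeries.C (MvPolynomial.X (some j)) := by
  refine PowerSeries.ext fun K => ?_
  rw [PowerSeries.coeff_map, Pc, PowerSeries.coeff_mk, PowerSeries.coeff_C]
  rcases Nat.eq_zero_or_pos K with rfl | hK
  · rw [hQ.coeff_zero, AddMonoidAlgebra.coeff_single, Finsupp.single_eq_same,
      substNone_zero_iterate_pderiv_gMv, if_pos rfl]
  · rw [if_neg hK.ne']
    exact hQ.resonant_vanish j K hK

lemma pderiv_none_renameTS (p : AmpRing n) : pderiv none (renameTS p : AmpRing2 n) = 0 := by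
  classical
  refine MvPolynomial.pderiv_eq_zero_of_notMem_vars fun h => ?_
  obtain ⟨v, -, hv⟩ := Finset.mem_image.mp (MvPolynomial.vars_rename _ p h)
  cases v <;> cases hv

lemma substNone_comp_renameTS (a : AmpRing2 n) : (substNone a).comp renameTS = renameTS :=
  MvPolynomial.ringHom_ext (fun c => by simp [substNone, renameTS])
    fun v => by cases v <;> simp [substNone, renameTS]

lemma substNone_comp_embedTA :
    (substNone (MvPolynomial.X (some none))).comp embedTA = renameTS (n := n) :=
  MvPolynomial.ringHom_ext (fun c => by simp [substNone, embedTA, renameTS])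
    fun v => by cases v <;> simp [substNone, embedTA, renameTS]

lemma coeffPderiv_C_embedTA (p : AmpRing n) :
    (PowerSeries.C (embedTA p)).coeffPderiv none = PowerSeries.C (embedTA (pderiv none p)) := by
  rw [PowerSeries.coeffPderiv_C]
  exact congrArg _
    (MvPolynomial.pderiv_rename (Option.map_injective (Option.some_injective _)) none p)

lemma coeffPderiv_substTA0 (Q : Fin n → EpsSeries (AmpRing n)) (p : AmpRing n) :
    (substTA0 Q p).coeffPderiv none = substTA0 Q (pderiv none p) := by
  refine PowerSeries.coeffPderiv_apply_of_forall_X _ _ _ (fun c => by simp [substTA0])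
    (fun v => ?_) p
  cases v with
  | none =>
    rw [show substTA0 Q (MvPolynomial.X none)
        = PowerSeries.C (MvPolynomial.X none - MvPolynomial.X (some none)) by simp [substTA0],
      PowerSeries.coeffPderiv_C]
    simp
  | some i =>
    rw [MvPolynomial.pderiv_X_of_ne (by simp), map_zero]
    ext K
    simp [substTA0, renAmpS0, pderiv_none_renameTS]

lemma map_substNone_mode_ampSubst_embedTA (Q : Fin n → EpsSeries (AmpRing n)) (j : Fin n) :
    PowerSeries.map (substNone (MvPolynomial.X (some none)))
        (EpsSeries.mode (EpsSeries.ampSubst ((PowerSeries.C (R := AmpRing2 n)).comp embedTA)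
          (Q j)) 0)
      = renAmpS0 Q j := by
  rw [EpsSeries.mode_ampSubst, PowerSeries.coeffSubst_C_comp, ← RingHom.comp_apply,
    ← PowerSeries.map_comp, ← Pc_eq_mode, renAmpS0, substNone_comp_embedTA]

lemma IsNilpotentSecularFamily.map_substNone_mode_ampSubst_substTA0
    {V : Fin n → MvPolynomial (Fin n) (Polynomial (AddMonoidAlgebra ℂ ℤ))}
    {Q : Fin n → EpsSeries (AmpRing n)} (hQ : IsNilpotentSecularFamily V Q) (j : Fin n) :
    PowerSeries.map (substNone (MvPolynomial.X (some none)))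
        (EpsSeries.mode (EpsSeries.ampSubst (substTA0 Q) (Q j)) 0)
      = renAmpS0 Q j := by
  have hΦ : ((PowerSeries.map (substNone (MvPolynomial.X (some none)))).comp (substTA0 Q)).comp
      (substNone 0)
      = (PowerSeries.map (substNone (MvPolynomial.X (some none)))).comp (substTA0 Q) := by
    refine MvPolynomial.ringHom_ext (fun c => by simp [substNone]) fun v => ?_
    cases v with
    | none => simp [substNone, substTA0]
    | some i => simp [substNone]
  rw [EpsSeries.mode_ampSubst, PowerSeries.map_coeffSubst, ← hΦ, ← PowerSeries.coeffSubst_map,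
    ← Pc_eq_mode, hQ.map_substNone_zero_Pc_zero, PowerSeries.coeffSubst_C]
  simp [substTA0, renAmpS0, ← RingHom.comp_apply, ← PowerSeries.map_comp, substNone_comp_renameTS]

end Amplitudes

theorem nilpotent_functional_relation_general {n : ℕ}
    (V : Fin n → MvPolynomial (Fin n) (Polynomial (AddMonoidAlgebra ℂ ℤ)))
    (Q : Fin n → EpsSeries (AmpRing n))
    (hQ : IsNilpotentSecularFamily V Q) :
    ∀ (j : Fin n) (m : ℤ),
      PowerSeries.map embedTA (Pc Q j m) = substSeries (substTA0 Q) (Pc Q j m) := by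
  have hsol := hQ.isNilpotentSolution
  have hL := hsol.ampSubst ((PowerSeries.C (R := AmpRing2 n)).comp embedTA)
    (fun c => by simp [embedTA]) coeffPderiv_C_embedTA
  have hS := hsol.ampSubst (substTA0 Q) (fun c => by simp [substTA0]) (coeffPderiv_substTA0 Q)
  have hLS := hL.eq_of_map_substNone_mode_zero hS (MvPolynomial.X (some none)) fun j => by
    rw [map_substNone_mode_ampSubst_embedTA, hQ.map_substNone_mode_ampSubst_substTA0]
  intro j m
  have h := congrArg (fun Y => EpsSeries.mode (Y j) m) hLS
  simp only [EpsSeries.mode_ampSubst, PowerSeries.coeffSubst_C_comp] at h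
  exact h

/-- functional relation for secular coefficients, nilpotent case:
`P_{j,m}(ε, t, A) = P_{j,m}(ε, t - s, 𝒜(ε, s, A))` as formal power series in `ε` with
coefficients in `ℂ[t,s,A]`, where `𝒜_j = P_{j,0}`. -/
theorem nilpotent_functional_relation {n : ℕ} (hn : 0 < n)
    (V : Fin n → MvPolynomial (Fin n) (Polynomial (AddMonoidAlgebra ℂ ℤ)))
    (Q : Fin n → EpsSeries (AmpRing n))
    (hQ : IsNilpotentSecularFamily V Q) :
    ∀ (j : Fin n) (m : ℤ),
      PowerSeries.map embedTA (Pc Q j m) = substSeries (substTA0 Q) (Pc Q j m) :=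
  nilpotent_functional_relation_general V Q hQ

end
end

section
/- Let g_k be the polynomials defined by g_0(u) = 1 and g_k(u) = (u / (2·k!)) · Π_{i=1}^{k−1} ((u + k)/2 − i) for k ≥ 1. Then for every u ∈ ℝ and every ζ ∈ ℝ with |ζ| < 1, the series Σ_{k=0}^{∞} g_k(u)·(2ζ)^k converges absolutely and Σ_{k=0}^{∞} g_k(u)·(2ζ)^k = (√(1+ζ²) + ζ)^u. -/
/-!
The coefficients `a_k = 2^k g_k(u)` satisfy `(k+1)(k+2) a_{k+2} = (u² - k²) a_k`, which keeps them
bounded, so `f(x) = ∑ a_k x^k` converges on `|x| < 1` and solves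
`(1 + x²) f'' + x f' = u² f` with `f(0) = 1`, `f'(0) = u`. Then `W = √(1+x²) f' - u f` solves
`W' = -u W / √(1+x²)` with `W(0) = 0`, hence vanishes, so `f' = u f / √(1+x²)`: the first-order
equation solved by `exp (u · arsinh x) = (√(1+x²) + x)^u` with the same value at `0`.
-/

noncomputable section

open Polynomial

/-- The polynomials `g_k ∈ ℝ[u]`: `g_0(u) = 1` and, for `k ≥ 1`,
`g_k(u) = (u / (2·k!)) · Π_{i=1}^{k-1} ((u + k)/2 - i)`. -/
def g : ℕ → Polynomial ℝ
  | 0 => 1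
  | (k + 1) =>
      Polynomial.C (1 / (2 * ((k + 1).factorial : ℝ))) * Polynomial.X *
        ∏ i ∈ Finset.range k,
          (Polynomial.C (1 / 2 : ℝ) * (Polynomial.X + Polynomial.C ((k + 1 : ℕ) : ℝ))
            - Polynomial.C ((i + 1 : ℕ) : ℝ))

open Finset Real

theorem summable_add_pow_mul_geometric (a : ℝ) (m : ℕ) {r : ℝ} (hr : |r| < 1) :
    Summable fun n : ℕ => ((n : ℝ) + a) ^ m * r ^ n := by
  simp_rw [add_pow, sum_mul]
  refine summable_sum fun i _ => ?_
  simpa [mul_right_comm _ _ (r ^ _), mul_assoc] using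
    (summable_pow_mul_geometric_of_norm_lt_one i hr).mul_right (a ^ (m - i) * m.choose i)

def derivCoeff (c : ℕ → ℝ) (k : ℕ) : ℝ := (k + 1) * c (k + 1)

def PolyBounded (c : ℕ → ℝ) : Prop := ∃ C : ℝ, ∃ m : ℕ, ∀ k : ℕ, |c k| ≤ C * ((k : ℝ) + 1) ^ m

def powerSeriesSum (c : ℕ → ℝ) (x : ℝ) : ℝ := ∑' k, c k * x ^ k

theorem powerSeriesSum_zero (c : ℕ → ℝ) : powerSeriesSum c 0 = c 0 := by
  rw [powerSeriesSum, tsum_eq_single 0 fun k hk => by simp [hk]]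
  simp

namespace PolyBounded

variable {c : ℕ → ℝ}

theorem summable_abs (hc : PolyBounded c) {x : ℝ} (hx : |x| < 1) :
    Summable fun k => |c k * x ^ k| := by
  obtain ⟨C, m, hcC⟩ := hc
  refine .of_nonneg_of_le (fun _ => abs_nonneg _) (fun k => ?_)
    ((summable_add_pow_mul_geometric 1 m (r := |x|) (by rwa [abs_abs])).mul_left C)
  rw [abs_mul, abs_pow, ← mul_assoc]
  exact mul_le_mul_of_nonneg_right (hcC k) (by positivity)

theorem hasSum (hc : PolyBounded c) {x : ℝ} (hx : |x| < 1) :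
    HasSum (fun k => c k * x ^ k) (powerSeriesSum c x) :=
  (hc.summable_abs hx).of_abs.hasSum

theorem derivCoeff (hc : PolyBounded c) : PolyBounded (derivCoeff c) := by
  obtain ⟨C, m, hcC⟩ := hc
  have hC : 0 ≤ C := by simpa using (abs_nonneg _).trans (hcC 0)
  refine ⟨2 ^ m * C, m + 1, fun k => ?_⟩
  have hk : (k : ℝ) + 1 + 1 ≤ 2 * ((k : ℝ) + 1) := by linarith [k.cast_nonneg (α := ℝ)]
  calc |_root_.derivCoeff c k| = ((k : ℝ) + 1) * |c (k + 1)| := by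
        rw [_root_.derivCoeff, abs_mul, abs_of_nonneg (by positivity)]
    _ ≤ ((k : ℝ) + 1) * (C * (2 * ((k : ℝ) + 1)) ^ m) := by
        gcongr
        exact (hcC _).trans (by push_cast; gcongr)
    _ = 2 ^ m * C * ((k : ℝ) + 1) ^ (m + 1) := by rw [mul_pow]; ring

theorem hasDerivAt (hc : PolyBounded c) {x : ℝ} (hx : |x| < 1) :
    HasDerivAt (powerSeriesSum c) (powerSeriesSum (_root_.derivCoeff c) x) x := by
  obtain ⟨r, hxr, hr⟩ := exists_between hx
  have hr0 : 0 ≤ r := (abs_nonneg x).trans hxr.le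
  have hsum0 : Summable fun n => c n * (0 : ℝ) ^ n := (hc.summable_abs (by simp)).of_abs
  obtain ⟨C, m, hcC⟩ := hc
  have hbound : Summable fun n : ℕ => C * ((n : ℝ) + 1) ^ (m + 1) * r ^ (n - 1) := by
    rw [← summable_nat_add_iff 1]
    simpa [add_assoc, one_add_one_eq_two, mul_assoc] using
      (summable_add_pow_mul_geometric 2 (m + 1) (by rwa [abs_of_nonneg hr0])).mul_left C
  have hderiv_le : ∀ n, ∀ y, |y| ≤ r →
      ‖c n * (n * y ^ (n - 1))‖ ≤ C * ((n : ℝ) + 1) ^ (m + 1) * r ^ (n - 1) := by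
    intro n y hy
    calc ‖c n * (n * y ^ (n - 1))‖ = |c n| * (n * |y| ^ (n - 1)) := by
          rw [norm_eq_abs, abs_mul, abs_mul, abs_pow, Nat.abs_cast]
      _ ≤ C * ((n : ℝ) + 1) ^ m * (((n : ℝ) + 1) * r ^ (n - 1)) := by
          refine mul_le_mul (hcC n) ?_ (by positivity) ((abs_nonneg _).trans (hcC n))
          gcongr
          linarith
      _ = C * ((n : ℝ) + 1) ^ (m + 1) * r ^ (n - 1) := by ring
  have key := hasDerivAt_tsum_of_isPreconnected hbound Metric.isOpen_ball
    (convex_ball 0 r).isPreconnected (g := fun n y => c n * y ^ n)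
    (g' := fun n y => c n * (n * y ^ (n - 1)))
    (fun n y _ => (hasDerivAt_pow n y).const_mul (c n))
    (fun n y hy => hderiv_le n y (by simpa using (mem_ball_zero_iff.mp hy).le))
    (Metric.mem_ball_self (by linarith [abs_nonneg x])) hsum0 (by simpa using hxr)
  rw [Summable.tsum_eq_zero_add (.of_norm_bounded hbound fun n => hderiv_le n x hxr.le)] at key
  unfold powerSeriesSum
  simpa [_root_.derivCoeff, mul_left_comm, mul_comm] using key

end PolyBounded

theorem hasSum_pow_mul_of_hasSum_succ {e : ℕ → ℝ} {x s : ℝ} (he : e 0 = 0)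
    (h : HasSum (fun k => e (k + 1) * x ^ k) s) : HasSum (fun k => e k * x ^ k) (x * s) := by
  rw [← hasSum_nat_add_iff' 1, sum_range_one, he, zero_mul, sub_zero]
  simpa only [pow_succ', mul_left_comm] using h.mul_left x

theorem powerSeriesSum_ode {c : ℕ → ℝ} {u x : ℝ} (hc : PolyBounded c)
    (hrec : ∀ k : ℕ, ((k : ℝ) + 1) * ((k : ℝ) + 2) * c (k + 2) = (u ^ 2 - (k : ℝ) ^ 2) * c k)
    (hx : |x| < 1) :
    x * powerSeriesSum (derivCoeff c) x + (1 + x ^ 2) * powerSeriesSum (derivCoeff (derivCoeff c)) x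
      = u ^ 2 * powerSeriesSum c x := by
  have h1 := hc.derivCoeff.hasSum hx
  have h2 := hc.derivCoeff.derivCoeff.hasSum hx
  have hx1 : HasSum (fun k : ℕ => ((k : ℝ) * c k) * x ^ k) (x * powerSeriesSum (derivCoeff c) x) :=
    hasSum_pow_mul_of_hasSum_succ (by simp) (by simpa [derivCoeff] using h1)
  have hx2 : HasSum (fun k : ℕ => ((k : ℝ) * ((k : ℝ) - 1) * c k) * x ^ k)
      (x * (x * powerSeriesSum (derivCoeff (derivCoeff c)) x)) := by
    refine hasSum_pow_mul_of_hasSum_succ (by simp) (hasSum_pow_mul_of_hasSum_succ (by simp) ?_)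
    convert h2 using 2 with k
    simp only [derivCoeff]
    push_cast
    ring
  have hsum : HasSum (fun k : ℕ => u ^ 2 * (c k * x ^ k))
      (x * powerSeriesSum (derivCoeff c) x + x * (x * powerSeriesSum (derivCoeff (derivCoeff c)) x)
        + powerSeriesSum (derivCoeff (derivCoeff c)) x) := by
    convert (hx1.add hx2).add h2 using 2 with k
    simp only [derivCoeff, add_assoc, Nat.reduceAdd]
    push_cast
    linear_combination -(x ^ k) * hrec k
  linear_combination hsum.unique ((hc.hasSum hx).mul_left (u ^ 2))

theorem div_eq_div_of_hasDerivAt_mul_self {s : Set ℝ} (hs : IsOpen s) (hs' : IsPreconnected s)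
    {a f g : ℝ → ℝ} (hf : ∀ x ∈ s, HasDerivAt f (a x * f x) x)
    (hg : ∀ x ∈ s, HasDerivAt g (a x * g x) x) (hg0 : ∀ x ∈ s, g x ≠ 0) {x y : ℝ} (hx : x ∈ s)
    (hy : y ∈ s) : f x / g x = f y / g y := by
  have hquot : ∀ z ∈ s, HasDerivAt (fun z => f z / g z) 0 z := fun z hz =>
    ((hf z hz).div (hg z hz) (hg0 z hz)).congr_deriv (by ring)
  exact hs.is_const_of_deriv_eq_zero hs'
    (fun z hz => (hquot z hz).differentiableAt.differentiableWithinAt)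
    (fun z hz => (hquot z hz).deriv) hx hy

theorem hasDerivAt_exp_mul_arsinh (v x : ℝ) :
    HasDerivAt (fun x => exp (v * arsinh x)) (v * (√(1 + x ^ 2))⁻¹ * exp (v * arsinh x)) x :=
  (((hasDerivAt_arsinh x).const_mul v).exp).congr_deriv (mul_comm _ _)

theorem hasDerivAt_sqrt_one_add_sq (x : ℝ) :
    HasDerivAt (fun x => √(1 + x ^ 2)) (x * (√(1 + x ^ 2))⁻¹) x := by
  convert ((hasDerivAt_pow 2 x).const_add 1).sqrt (by positivity) using 1
  field_simp
  ring

theorem eq_exp_mul_arsinh_of_ode {s : Set ℝ} (hs : IsOpen s) (hs' : IsPreconnected s)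
    (h0 : (0 : ℝ) ∈ s) {u : ℝ} {f f' f'' : ℝ → ℝ}
    (hf : ∀ x ∈ s, HasDerivAt f (f' x) x) (hf' : ∀ x ∈ s, HasDerivAt f' (f'' x) x)
    (hode : ∀ x ∈ s, x * f' x + (1 + x ^ 2) * f'' x = u ^ 2 * f x) (hf0 : f 0 = 1)
    (hf'0 : f' 0 = u) : ∀ x ∈ s, f x = exp (u * arsinh x) := by
  have hρ : ∀ x : ℝ, √(1 + x ^ 2) ^ 2 = 1 + x ^ 2 := fun x => sq_sqrt (by positivity)
  have hρ0 : ∀ x : ℝ, √(1 + x ^ 2) ≠ 0 := fun x => (sqrt_pos.2 (by positivity)).ne'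
  set W : ℝ → ℝ := fun x => √(1 + x ^ 2) * f' x - u * f x
  have hW : ∀ x ∈ s, HasDerivAt W (-u * (√(1 + x ^ 2))⁻¹ * W x) x := fun x hx => by
    refine (((hasDerivAt_sqrt_one_add_sq x).mul (hf' x hx)).sub
      ((hf x hx).const_mul u)).congr_deriv ?_
    have := hρ0 x
    field_simp
    linear_combination hode x hx + f'' x * hρ x
  have hW0 : ∀ x ∈ s, W x = 0 := fun x hx => by
    have := div_eq_div_of_hasDerivAt_mul_self hs hs' hW
      (fun x _ => hasDerivAt_exp_mul_arsinh (-u) x) (fun x _ => (exp_pos _).ne') hx h0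
    simpa [W, hf0, hf'0, (exp_pos _).ne'] using this
  have hf_eq : ∀ x ∈ s, HasDerivAt f (u * (√(1 + x ^ 2))⁻¹ * f x) x := fun x hx => by
    refine (hf x hx).congr_deriv ?_
    have hWx : √(1 + x ^ 2) * f' x - u * f x = 0 := hW0 x hx
    have := hρ0 x
    field_simp
    linear_combination hWx
  intro x hx
  have := div_eq_div_of_hasDerivAt_mul_self hs hs' hf_eq
    (fun x _ => hasDerivAt_exp_mul_arsinh u x) (fun x _ => (exp_pos _).ne') hx h0
  simpa [hf0, div_eq_one_iff_eq (exp_pos _).ne'] using this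

def gCoeff (u : ℝ) (k : ℕ) : ℝ := (g k).eval u * 2 ^ k

theorem eval_g_succ (u : ℝ) (k : ℕ) :
    (g (k + 1)).eval u
      = u / (2 * (k + 1).factorial) * ∏ i ∈ range k, ((u + k + 1) / 2 - (i + 1)) := by
  simp only [g, eval_mul, eval_C, eval_X, eval_prod, eval_sub, eval_add]
  push_cast
  rw [div_mul_eq_mul_div, one_div_mul_eq_div]
  congr 1
  · ring
  · exact prod_congr rfl fun i _ => by ring

theorem gCoeff_zero (u : ℝ) : gCoeff u 0 = 1 := by simp [gCoeff, g]

theorem gCoeff_one (u : ℝ) : gCoeff u 1 = u := by simp [gCoeff, eval_g_succ]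

theorem gCoeff_recurrence (u : ℝ) (k : ℕ) :
    ((k : ℝ) + 1) * ((k : ℝ) + 2) * gCoeff u (k + 2) = (u ^ 2 - (k : ℝ) ^ 2) * gCoeff u k := by
  rcases k with _ | j
  · simp [gCoeff, g]
    ring
  · have hprod : ∏ i ∈ range (j + 2), ((u + (j + 2 : ℕ) + 1) / 2 - (i + 1))
        = (∏ i ∈ range j, ((u + j + 1) / 2 - (i + 1))) * ((u ^ 2 - ((j : ℝ) + 1) ^ 2) / 4) := by
      rw [prod_range_succ, prod_range_succ', mul_assoc]
      congr 1
      · exact prod_congr rfl fun i _ => by push_cast; ring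
      · push_cast; ring
    simp only [gCoeff, eval_g_succ, hprod, Nat.factorial_succ (j + 2), Nat.factorial_succ (j + 1)]
    push_cast
    field_simp
    ring

theorem abs_le_max_mul_exp_sum {a ε : ℕ → ℝ} (hε : ∀ k, 0 ≤ ε k)
    (h : ∀ k, |a (k + 2)| ≤ (1 + ε k) * |a k|) (k : ℕ) :
    |a k| ≤ max |a 0| |a 1| * exp (∑ j ∈ range k, ε j) := by
  induction k using Nat.twoStepInduction with
  | zero => simp
  | one =>
    simpa using (le_max_right _ _).trans
      (le_mul_of_one_le_right (by positivity) (one_le_exp (hε 0)))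
  | more k ih _ =>
    calc |a (k + 2)| ≤ (1 + ε k) * |a k| := h k
      _ ≤ exp (ε k) * (max |a 0| |a 1| * exp (∑ j ∈ range k, ε j)) :=
          mul_le_mul (by linarith [add_one_le_exp (ε k)]) ih (abs_nonneg _) (exp_pos _).le
      _ = max |a 0| |a 1| * exp (∑ j ∈ range (k + 1), ε j) := by
          rw [sum_range_succ, exp_add]
          ring
      _ ≤ max |a 0| |a 1| * exp (∑ j ∈ range (k + 2), ε j) := by
          have : ∑ j ∈ range (k + 1), ε j ≤ ∑ j ∈ range (k + 2), ε j :=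
            sum_le_sum_of_subset_of_nonneg (range_subset_range.2 (by omega))
              fun j _ _ => hε j
          gcongr

theorem abs_gCoeff_le (u : ℝ) (k : ℕ) : |gCoeff u k| ≤ max 1 |u| * exp (u ^ 2) := by
  -- `(k+1)(k+2)(1 + ε k) = (k+1)(k+2) + u²`, and `∑ ε` telescopes
  set ε : ℕ → ℝ := fun j => u ^ 2 * (1 / ((j : ℝ) + 1) - 1 / ((j + 1 : ℕ) + 1))
  have hε : ∀ j, 0 ≤ ε j := fun j => by
    have : 1 / ((j + 1 : ℕ) + 1 : ℝ) ≤ 1 / ((j : ℝ) + 1) := by gcongr; linarith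
    exact mul_nonneg (sq_nonneg u) (sub_nonneg.2 this)
  have hstep : ∀ k, |gCoeff u (k + 2)| ≤ (1 + ε k) * |gCoeff u k| := fun k => by
    have hpos : (0 : ℝ) < ((k : ℝ) + 1) * ((k : ℝ) + 2) := by positivity
    refine le_of_mul_le_mul_left ?_ hpos
    calc ((k : ℝ) + 1) * ((k : ℝ) + 2) * |gCoeff u (k + 2)|
        = |u ^ 2 - (k : ℝ) ^ 2| * |gCoeff u k| := by
          rw [← abs_of_pos hpos, ← abs_mul, gCoeff_recurrence, abs_mul]
      _ ≤ (((k : ℝ) + 1) * ((k : ℝ) + 2) + u ^ 2) * |gCoeff u k| := by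
          gcongr
          rw [abs_le]
          constructor <;> nlinarith [sq_nonneg u, sq_nonneg (k : ℝ)]
      _ = ((k : ℝ) + 1) * ((k : ℝ) + 2) * ((1 + ε k) * |gCoeff u k|) := by
          simp only [ε]
          push_cast
          field_simp
          ring
  have hsum : ∑ j ∈ range k, ε j ≤ u ^ 2 := by
    rw [← mul_sum, sum_range_sub' (fun j : ℕ => 1 / ((j : ℝ) + 1))]
    have : 0 ≤ 1 / ((k : ℝ) + 1) := by positivity
    nlinarith [sq_nonneg u]
  calc |gCoeff u k| ≤ max |gCoeff u 0| |gCoeff u 1| * exp (∑ j ∈ range k, ε j) :=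
        abs_le_max_mul_exp_sum hε hstep k
    _ ≤ max 1 |u| * exp (u ^ 2) := by
        rw [gCoeff_zero, gCoeff_one, abs_one]
        gcongr

theorem polyBounded_gCoeff (u : ℝ) : PolyBounded (gCoeff u) :=
  ⟨_, 0, fun k => by simpa using abs_gCoeff_le u k⟩

/-- generating function of the `g_k`: for every `u ∈ ℝ` and `ζ ∈ ℝ` with
`|ζ| < 1`, the series `Σ_k g_k(u) (2ζ)^k` converges absolutely, with sum
`(√(1+ζ²) + ζ)^u = exp (u · log (√(1+ζ²) + ζ))`. -/
theorem g_generating_function (u ζ : ℝ) (hζ : |ζ| < 1) :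
    (Summable fun k : ℕ => |(g k).eval u * (2 * ζ) ^ k|)
    ∧ HasSum (fun k : ℕ => (g k).eval u * (2 * ζ) ^ k)
        (Real.exp (u * Real.log (Real.sqrt (1 + ζ ^ 2) + ζ))) := by
  have hterm : ∀ k, (g k).eval u * (2 * ζ) ^ k = gCoeff u k * ζ ^ k := fun k => by
    rw [gCoeff, mul_pow, mul_assoc]
  have hc := polyBounded_gCoeff u
  have hball : ∀ x ∈ Metric.ball (0 : ℝ) 1, |x| < 1 := by simp
  have hsum_eq := eq_exp_mul_arsinh_of_ode Metric.isOpen_ball (convex_ball 0 1).isPreconnected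
    (Metric.mem_ball_self one_pos) (fun x hx => hc.hasDerivAt (hball x hx))
    (fun x hx => hc.derivCoeff.hasDerivAt (hball x hx))
    (fun x hx => powerSeriesSum_ode hc (gCoeff_recurrence u) (hball x hx))
    (by rw [powerSeriesSum_zero, gCoeff_zero])
    (by simp [powerSeriesSum_zero, derivCoeff, gCoeff_one])
  have harsinh : log (√(1 + ζ ^ 2) + ζ) = arsinh ζ := by
    rw [arsinh, add_comm]
  simp only [hterm, harsinh]
  have hζ_mem : ζ ∈ Metric.ball (0 : ℝ) 1 := by simpa using hζ
  exact ⟨hc.summable_abs hζ, hsum_eq ζ hζ_mem ▸ hc.hasSum hζ⟩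

end
end
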